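/- arXiv:2508.02474 — 10 statements merged into one kernel-verified Lean document; each statement's English description precedes it below -/
import Mathlib

section
/- Let d ∈ ℕ, let D ⊆ ℝ^d be a nonempty convex set, and let f : D → ℝ. If f is t-convex for some t ∈ (0,1), then f is Jensen convex, i.e., f((x+y)/2) ≤ (f(x)+f(y))/2 for all x, y ∈ D. -/
/-- If `f : D → ℝ` on a nonempty convex `D ⊆ ℝ^d` is `t`-convex for some `t ∈ (0,1)`,
then `f` is Jensen convex. -/
theorem stmt_0 (d : ℕ) (D : Set (EuclideanSpace ℝ (Fin d))) (hne : D.Nonempty)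
    (hD : Convex ℝ D) (f : EuclideanSpace ℝ (Fin d) → ℝ) (t : ℝ)
    (ht : t ∈ Set.Ioo (0 : ℝ) 1)
    (htconv : ∀ x ∈ D, ∀ y ∈ D, f (t • x + (1 - t) • y) ≤ t * f x + (1 - t) * f y) :
    ∀ x ∈ D, ∀ y ∈ D, f ((1/2 : ℝ) • x + (1/2 : ℝ) • y) ≤ (f x + f y) / 2 := by
  obtain ⟨ht0, ht1⟩ := ht
  intro x hx y hy
  set z : EuclideanSpace ℝ (Fin d) := (1/2 : ℝ) • x + (1/2 : ℝ) • y with hz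
  have hzD : z ∈ D := hD hx hy (by norm_num) (by norm_num) (by norm_num)
  have haD : t • z + (1 - t) • x ∈ D := hD hzD hx ht0.le (by linarith) (by ring)
  have hbD : t • y + (1 - t) • z ∈ D := hD hy hzD ht0.le (by linarith) (by ring)
  have h1 := htconv _ haD _ hbD
  have h2 := htconv _ hzD _ hx
  have h3 := htconv _ hy _ hzD
  have key : t • (t • z + (1 - t) • x) + (1 - t) • (t • y + (1 - t) • z) = z := by
    rw [hz]; module
  rw [key] at h1
  nlinarith [mul_pos ht0 (by linarith : (0:ℝ) < 1 - t), h1, h2, h3]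
end

section
/- Let d ∈ ℕ, let D ⊆ ℝ^d be a nonempty open convex set, and let f : D → ℝ. If f is t-convex for some t ∈ (0,1) and f is bounded from above on some nonempty open subset of D, then f is convex and continuous on D. -/
/-!
The set of `s ∈ [0, 1]` for which `f` is `s`-convex contains `0` and `1` and is stable under
`(a, b) ↦ t a + (1 - t) b`, so it is dense in `[0, 1]`; in particular it contains arbitrarily
small `s > 0`. Writing `z = s u + (1 - s) w` with such an `s` carries the upper bound from a
ball around `u` to a ball around any `z ∈ D`, and the same estimate centred at `z` gives
`|f v - f z| ≤ s / (1 - s) * (M - f z)` near `z`, hence continuity. For continuous `f` the set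
of admissible `s` is closed, hence all of `[0, 1]`, which is convexity.
-/

open Set Filter Topology Metric

lemma Icc_subset_of_isClosed_of_stable {t : ℝ} (ht : t ∈ Ioo 0 1) {C : Set ℝ} (hC : IsClosed C)
    (h0 : 0 ∈ C) (h1 : 1 ∈ C) (hstab : ∀ a ∈ C, ∀ b ∈ C, t * a + (1 - t) * b ∈ C) :
    Icc 0 1 ⊆ C := by
  intro s hs
  by_contra hsC
  -- `a < s < b` are the ends of the gap of `C` around `s`; their combination falls in the gap.
  have hA : IsClosed (C ∩ Iic s) := hC.inter isClosed_Iic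
  have hB : IsClosed (C ∩ Ici s) := hC.inter isClosed_Ici
  have haA : sSup (C ∩ Iic s) ∈ C ∩ Iic s := hA.csSup_mem ⟨0, h0, hs.1⟩ ⟨s, fun _ hx => hx.2⟩
  have hbB : sInf (C ∩ Ici s) ∈ C ∩ Ici s := hB.csInf_mem ⟨1, h1, hs.2⟩ ⟨s, fun _ hx => hx.2⟩
  set a := sSup (C ∩ Iic s)
  set b := sInf (C ∩ Ici s)
  have has : a < s := haA.2.lt_of_ne fun h => hsC (h ▸ haA.1)
  have hsb : s < b := hbB.2.lt_of_ne' fun h => hsC (h ▸ hbB.1)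
  have hm := hstab a haA.1 b hbB.1
  have ham : a < t * a + (1 - t) * b := by nlinarith [ht.1, ht.2]
  have hmb : t * a + (1 - t) * b < b := by nlinarith [ht.1, ht.2]
  rcases le_total (t * a + (1 - t) * b) s with hms | hsm
  · exact ham.not_ge (le_csSup ⟨s, fun _ hx => hx.2⟩ ⟨hm, hms⟩)
  · exact hmb.not_ge (csInf_le ⟨s, fun _ hx => hx.2⟩ ⟨hm, hsm⟩)

lemma Icc_subset_closure_of_stable {t : ℝ} (ht : t ∈ Ioo 0 1) {T : Set ℝ}
    (h0 : 0 ∈ T) (h1 : 1 ∈ T) (hstab : ∀ a ∈ T, ∀ b ∈ T, t * a + (1 - t) * b ∈ T) :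
    Icc 0 1 ⊆ closure T :=
  Icc_subset_of_isClosed_of_stable ht isClosed_closure (subset_closure h0) (subset_closure h1)
    fun _ ha _ hb => map_mem_closure₂ (f := fun a b => t * a + (1 - t) * b) (by fun_prop) ha hb hstab

lemma frequently_nhdsGT_zero_of_Icc_subset_closure {T : Set ℝ} (h : Icc 0 1 ⊆ closure T) :
    ∃ᶠ s in 𝓝[>] 0, s ∈ T := by
  have hIoo : Ioo 0 1 ⊆ closure (Ioo 0 1 ∩ T) := fun s hs =>
    isOpen_Ioo.inter_closure ⟨hs, h (Ioo_subset_Icc_self hs)⟩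
  have h0 : (0 : ℝ) ∈ closure (Ioo 0 1 ∩ T) := by
    rw [← closure_closure (s := Ioo 0 1 ∩ T)]
    exact closure_mono hIoo (by simp [closure_Ioo zero_ne_one])
  rw [frequently_nhdsWithin_iff]
  exact (mem_closure_iff_frequently.1 h0).mono fun s hs => ⟨hs.2, hs.1.1⟩

section ConvexityCoeffs

variable {E : Type*} [NormedAddCommGroup E] [NormedSpace ℝ E] {D : Set E} {f : E → ℝ}

def convexityCoeffs (D : Set E) (f : E → ℝ) : Set ℝ :=
  {s ∈ Icc 0 1 | ∀ x ∈ D, ∀ y ∈ D, f (s • x + (1 - s) • y) ≤ s * f x + (1 - s) * f y}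

lemma zero_mem_convexityCoeffs : 0 ∈ convexityCoeffs D f :=
  ⟨left_mem_Icc.2 zero_le_one, fun _ _ _ _ => by simp⟩

lemma one_mem_convexityCoeffs : 1 ∈ convexityCoeffs D f :=
  ⟨right_mem_Icc.2 zero_le_one, fun _ _ _ _ => by simp⟩

lemma combo_mem_convexityCoeffs (hD : Convex ℝ D) {t a b : ℝ} (ht : t ∈ convexityCoeffs D f)
    (ha : a ∈ convexityCoeffs D f) (hb : b ∈ convexityCoeffs D f) :
    t * a + (1 - t) * b ∈ convexityCoeffs D f := by
  obtain ⟨⟨ht0, ht1⟩, hft⟩ := ht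
  obtain ⟨⟨ha0, ha1⟩, hfa⟩ := ha
  obtain ⟨⟨hb0, hb1⟩, hfb⟩ := hb
  refine ⟨⟨by positivity, by nlinarith⟩, fun x hx y hy => ?_⟩
  have hcomb : t • (a • x + (1 - a) • y) + (1 - t) • (b • x + (1 - b) • y)
      = (t * a + (1 - t) * b) • x + (1 - (t * a + (1 - t) * b)) • y := by module
  have hxa : a • x + (1 - a) • y ∈ D := hD hx hy ha0 (sub_nonneg.2 ha1) (add_sub_cancel a 1)
  have hxb : b • x + (1 - b) • y ∈ D := hD hx hy hb0 (sub_nonneg.2 hb1) (add_sub_cancel b 1)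
  have key := hft _ hxa _ hxb
  rw [hcomb] at key
  nlinarith [mul_le_mul_of_nonneg_left (hfa x hx y hy) ht0,
    mul_le_mul_of_nonneg_left (hfb x hx y hy) (sub_nonneg.2 ht1)]

lemma Icc_subset_closure_convexityCoeffs (hD : Convex ℝ D) {t : ℝ} (ht : t ∈ Ioo 0 1)
    (htc : t ∈ convexityCoeffs D f) : Icc 0 1 ⊆ closure (convexityCoeffs D f) :=
  Icc_subset_closure_of_stable ht zero_mem_convexityCoeffs one_mem_convexityCoeffs
    fun _ ha _ hb => combo_mem_convexityCoeffs hD htc ha hb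

lemma le_of_mem_ball_combo {s : ℝ} (hs : s ∈ convexityCoeffs D f) (hs0 : 0 < s) {u w : E}
    {r M : ℝ} (hball : ball u r ⊆ D) (hM : ∀ x ∈ ball u r, f x ≤ M) (hw : w ∈ D) {v : E}
    (hv : v ∈ ball (s • u + (1 - s) • w) (s * r)) : f v ≤ s * M + (1 - s) * f w := by
  set x := u + s⁻¹ • (v - (s • u + (1 - s) • w))
  have hx : x ∈ ball u r := by
    rw [mem_ball, dist_eq_norm, add_sub_cancel_left, norm_smul, Real.norm_eq_abs,
      abs_of_pos (inv_pos.2 hs0), inv_mul_lt_iff₀ hs0, ← dist_eq_norm]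
    exact hv
  have hvx : s • x + (1 - s) • w = v := by
    simp only [x, smul_add, smul_smul, mul_inv_cancel₀ hs0.ne', one_smul]
    abel
  calc f v ≤ s * f x + (1 - s) * f w := hvx ▸ hs.2 x (hball hx) w hw
    _ ≤ s * M + (1 - s) * f w := by gcongr; exact hM x hx

lemma abs_sub_le_of_mem_convexityCoeffs {s : ℝ} (hs : s ∈ convexityCoeffs D f) (hs0 : 0 < s)
    (hs1 : s < 1) {z v : E} {ρ M : ℝ} (hball : ball z ρ ⊆ D) (hM : ∀ x ∈ ball z ρ, f x ≤ M)
    (hv : v ∈ ball z (s * ρ)) : |f v - f z| ≤ s / (1 - s) * (M - f z) := by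
  have hρ : 0 < ρ := pos_of_mul_pos_right (pos_of_mem_ball hv) hs0.le
  have hz := hball (mem_ball_self hρ)
  have hvD : v ∈ D := hball (ball_subset_ball (by nlinarith) hv)
  have hup : f v ≤ s * M + (1 - s) * f z :=
    le_of_mem_ball_combo hs hs0 hball hM hz (by rwa [← add_smul, add_sub_cancel, one_smul])
  -- `z` lies near `s • z + (1 - s) • v`, so the same estimate bounds `f z` through `f v`.
  have hlow : f z ≤ s * M + (1 - s) * f v := by
    refine le_of_mem_ball_combo hs hs0 hball hM hvD ?_
    rw [mem_ball, dist_eq_norm, show z - (s • z + (1 - s) • v) = (1 - s) • (z - v) by module,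
      norm_smul, Real.norm_of_nonneg (sub_nonneg.2 hs1.le), ← dist_eq_norm, dist_comm]
    calc (1 - s) * dist v z ≤ dist v z := mul_le_of_le_one_left dist_nonneg (by linarith)
      _ < s * ρ := hv
  have hfz := hM z (mem_ball_self hρ)
  rw [div_mul_eq_mul_div, le_div_iff₀ (sub_pos.2 hs1)]
  rcases abs_cases (f v - f z) with ⟨h, -⟩ | ⟨h, -⟩ <;> rw [h] <;> nlinarith

lemma exists_ball_bounded_of_frequently (hopen : IsOpen D)
    (hfreq : ∃ᶠ s in 𝓝[>] 0, s ∈ convexityCoeffs D f) {u : E} {r M : ℝ} (hr : 0 < r)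
    (hball : ball u r ⊆ D) (hM : ∀ x ∈ ball u r, f x ≤ M) {z : E} (hz : z ∈ D) :
    ∃ ρ > 0, ∃ M', ball z ρ ⊆ D ∧ ∀ x ∈ ball z ρ, f x ≤ M' := by
  obtain ⟨ρ₀, hρ₀, hzD⟩ := Metric.isOpen_iff.1 hopen z hz
  -- `w s` is the point with `z = s • u + (1 - s) • w s`; it tends to `z` as `s → 0`.
  set w : ℝ → E := fun s => (1 - s)⁻¹ • (z - s • u)
  have hw : ContinuousAt w 0 := by fun_prop (disch := norm_num)
  have hwD : ∀ᶠ s in 𝓝[>] 0, s < 1 ∧ w s ∈ D := by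
    refine nhdsWithin_le_nhds ((gt_mem_nhds zero_lt_one).and (hw.preimage_mem_nhds ?_))
    exact hopen.mem_nhds (by simpa [w] using hz)
  obtain ⟨s, hs, ⟨hs1, hwsD⟩, hs0 : 0 < s⟩ :=
    (hfreq.and_eventually (hwD.and self_mem_nhdsWithin)).exists
  have hzw : s • u + (1 - s) • w s = z := by
    simp only [w, smul_smul, mul_inv_cancel₀ (sub_pos.2 hs1).ne', one_smul]
    abel
  refine ⟨min (s * r) ρ₀, by positivity, s * M + (1 - s) * f (w s),
    (ball_subset_ball (min_le_right _ _)).trans hzD, fun x hx => ?_⟩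
  refine le_of_mem_ball_combo hs hs0 hball hM hwsD ?_
  rw [hzw]
  exact ball_subset_ball (min_le_left _ _) hx

lemma continuousAt_of_frequently (hfreq : ∃ᶠ s in 𝓝[>] 0, s ∈ convexityCoeffs D f)
    {z : E} {ρ M : ℝ} (hρ : 0 < ρ) (hball : ball z ρ ⊆ D) (hM : ∀ x ∈ ball z ρ, f x ≤ M) :
    ContinuousAt f z := by
  rw [ContinuousAt, Metric.tendsto_nhds]
  intro ε hε
  have hlim : Tendsto (fun s : ℝ => s / (1 - s) * (M - f z)) (𝓝 0) (𝓝 0) := by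
    simpa using (show ContinuousAt (fun s : ℝ => s / (1 - s) * (M - f z)) 0 by
      fun_prop (disch := norm_num)).tendsto
  have hsmall : ∀ᶠ s in 𝓝[>] 0, s < 1 ∧ s / (1 - s) * (M - f z) < ε :=
    nhdsWithin_le_nhds ((gt_mem_nhds zero_lt_one).and (hlim.eventually (gt_mem_nhds hε)))
  obtain ⟨s, hs, ⟨hs1, hsε⟩, hs0 : 0 < s⟩ :=
    (hfreq.and_eventually (hsmall.and self_mem_nhdsWithin)).exists
  filter_upwards [ball_mem_nhds z (mul_pos hs0 hρ)] with v hv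
  rw [Real.dist_eq]
  exact (abs_sub_le_of_mem_convexityCoeffs hs hs0 hs1 hball hM hv).trans_lt hsε

lemma isClosed_convexityCoeffs (hD : Convex ℝ D) (hf : ContinuousOn f D) :
    IsClosed (convexityCoeffs D f) := by
  have : convexityCoeffs D f = Icc 0 1 ∩ ⋂ x ∈ D, ⋂ y ∈ D, Icc 0 1 ∩
      (fun s : ℝ => f (s • x + (1 - s) • y) - (s * f x + (1 - s) * f y)) ⁻¹' Iic 0 := by
    ext s
    simp only [convexityCoeffs, mem_sep_iff, mem_inter_iff, mem_iInter, mem_preimage, mem_Iic,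
      sub_nonpos]
    exact ⟨fun h => ⟨h.1, fun x hx y hy => ⟨h.1, h.2 x hx y hy⟩⟩,
      fun h => ⟨h.1, fun x hx y hy => (h.2 x hx y hy).2⟩⟩
  rw [this]
  refine isClosed_Icc.inter (isClosed_biInter fun x hx => isClosed_biInter fun y hy => ?_)
  refine ContinuousOn.preimage_isClosed_of_isClosed ?_ isClosed_Icc isClosed_Iic
  refine (hf.comp (by fun_prop) fun s hs => ?_).sub (by fun_prop)
  exact hD hx hy hs.1 (sub_nonneg.2 hs.2) (add_sub_cancel s 1)

lemma convexOn_of_Icc_subset_convexityCoeffs (hD : Convex ℝ D)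
    (h : Icc 0 1 ⊆ convexityCoeffs D f) : ConvexOn ℝ D f := by
  refine ⟨hD, fun x hx y hy a b ha hb hab => ?_⟩
  obtain rfl : b = 1 - a := eq_sub_of_add_eq' hab
  exact (h ⟨ha, sub_nonneg.1 hb⟩).2 x hx y hy

end ConvexityCoeffs

theorem stmt_1_general (d : ℕ) (D : Set (EuclideanSpace ℝ (Fin d)))
    (hopen : IsOpen D) (hD : Convex ℝ D) (f : EuclideanSpace ℝ (Fin d) → ℝ) (t : ℝ)
    (ht : t ∈ Set.Ioo (0 : ℝ) 1)
    (htconv : ∀ x ∈ D, ∀ y ∈ D, f (t • x + (1 - t) • y) ≤ t * f x + (1 - t) * f y)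
    (hbdd : ∃ U : Set (EuclideanSpace ℝ (Fin d)), U ⊆ D ∧ IsOpen U ∧ U.Nonempty ∧
      ∃ M : ℝ, ∀ x ∈ U, f x ≤ M) :
    ConvexOn ℝ D f ∧ ContinuousOn f D := by
  obtain ⟨U, hUD, hUopen, ⟨u, hu⟩, M, hM⟩ := hbdd
  obtain ⟨r, hr, hru⟩ := Metric.isOpen_iff.1 hUopen u hu
  have hdense := Icc_subset_closure_convexityCoeffs hD ht ⟨Ioo_subset_Icc_self ht, htconv⟩
  have hfreq := frequently_nhdsGT_zero_of_Icc_subset_closure hdense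
  have hcont : ContinuousOn f D := fun z hz => by
    obtain ⟨ρ, hρ, M', hρD, hM'⟩ := exists_ball_bounded_of_frequently hopen hfreq hr
      (hru.trans hUD) (fun x hx => hM x (hru hx)) hz
    exact (continuousAt_of_frequently hfreq hρ hρD hM').continuousWithinAt
  refine ⟨convexOn_of_Icc_subset_convexityCoeffs hD ?_, hcont⟩
  exact hdense.trans (isClosed_convexityCoeffs hD hcont).closure_subset

/-- If `f : D → ℝ` on a nonempty open convex `D ⊆ ℝ^d` is `t`-convex for some `t ∈ (0,1)`
and `f` is bounded above on some nonempty open subset of `D`, then `f` is convex and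
continuous on `D`. -/
theorem stmt_1 (d : ℕ) (D : Set (EuclideanSpace ℝ (Fin d))) (hne : D.Nonempty)
    (hopen : IsOpen D) (hD : Convex ℝ D) (f : EuclideanSpace ℝ (Fin d) → ℝ) (t : ℝ)
    (ht : t ∈ Set.Ioo (0 : ℝ) 1)
    (htconv : ∀ x ∈ D, ∀ y ∈ D, f (t • x + (1 - t) • y) ≤ t * f x + (1 - t) * f y)
    (hbdd : ∃ U : Set (EuclideanSpace ℝ (Fin d)), U ⊆ D ∧ IsOpen U ∧ U.Nonempty ∧
      ∃ M : ℝ, ∀ x ∈ U, f x ≤ M) :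
    ConvexOn ℝ D f ∧ ContinuousOn f D :=
  stmt_1_general d D hopen hD f t ht htconv hbdd
end

section
/- Let (λ_n)_{n∈ℕ} ∈ Λ, let d ∈ ℕ, let D ⊆ ℝ^d be a compact convex set, and let f : D → ℝ₊ be nonnegative. Then the inequality f(∑_{i=1}^∞ λ_i x_i) ≤ ∑_{i=1}^∞ λ_i f(x_i) holds for all sequences x_i ∈ D, i ∈ ℕ, if and only if f is convex. -/
/-!
Convexity gives the inequality: the normalized partial sums of `∑ λᵢ xᵢ` are finite convex
combinations converging to `z = ∑ λᵢ xᵢ`, and `z` lies in the relative interior of `D`, since a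
functional `ℓ` supporting `D` at `z` satisfies `∑ λᵢ ℓ(xᵢ - z) = 0` with all terms `≤ 0`, hence
vanishes on the span of the `xᵢ - z`. A convex function is continuous on the relative interior, so
the finite Jensen inequalities pass to the limit.

Conversely, for `x, y ∈ D` the set of `t ∈ [0,1]` at which `f` satisfies the convexity inequality
on the segment `[y, x]` contains `0` and `1` and is closed under `λ`-combinations. In particular
it is closed under `(t, s) ↦ λ₀ t + (1 - λ₀) s`, which makes it dense in `[0,1]`; and every
`u ∈ (0,1)` is a `λ`-combination of points of a dense set, by choosing the terms one at a time so
that the remainder stays in `(0, ∑_{i ≥ n} λᵢ)`.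
-/

open Filter Topology Set

theorem sub_sum_range_pos {a : ℕ → ℝ} {s : ℝ} (ha : ∀ n, 0 < a n) (hs : HasSum a s) (n : ℕ) :
    0 < s - ∑ i ∈ Finset.range n, a i :=
  hasSum_lt (f := fun _ => 0) (g := fun i => a (i + n)) (i := 0) (fun _ => (ha _).le) (ha _)
    hasSum_zero ((hasSum_nat_add_iff' n).2 hs)

theorem exists_abs_sub_le_pow_of_forall_comb_mem {S : Set ℝ} {μ : ℝ} (hμ0 : 0 < μ) (hμ1 : μ < 1)
    (h0 : 0 ∈ S) (h1 : 1 ∈ S) (hS : ∀ x ∈ S, ∀ y ∈ S, μ * x + (1 - μ) * y ∈ S) (k : ℕ) :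
    ∀ u ∈ Icc (0 : ℝ) 1, ∃ z ∈ S, |u - z| ≤ max μ (1 - μ) ^ k := by
  induction k with
  | zero => exact fun u hu => ⟨0, h0, by simpa [abs_of_nonneg hu.1] using hu.2⟩
  | succ k ih =>
    intro u hu
    have hμ1' : 0 < 1 - μ := sub_pos.2 hμ1
    rw [pow_succ']
    rcases le_total u μ with hle | hle
    · obtain ⟨z, hz, hdist⟩ := ih (u / μ) ⟨div_nonneg hu.1 hμ0.le, (div_le_one hμ0).2 hle⟩
      refine ⟨μ * z + (1 - μ) * 0, hS z hz 0 h0, ?_⟩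
      calc |u - (μ * z + (1 - μ) * 0)| = |μ * (u / μ - z)| := by congr 1; field_simp; ring
        _ = μ * |u / μ - z| := by rw [abs_mul, abs_of_pos hμ0]
        _ ≤ _ := mul_le_mul (le_max_left _ _) hdist (abs_nonneg _) (by positivity)
    · obtain ⟨z, hz, hdist⟩ := ih ((u - μ) / (1 - μ))
        ⟨div_nonneg (by linarith) hμ1'.le, (div_le_one hμ1').2 (by linarith [hu.2])⟩
      refine ⟨μ * 1 + (1 - μ) * z, hS 1 h1 z hz, ?_⟩
      calc |u - (μ * 1 + (1 - μ) * z)| = |(1 - μ) * ((u - μ) / (1 - μ) - z)| := by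
            congr 1; field_simp; ring
        _ = (1 - μ) * |(u - μ) / (1 - μ) - z| := by rw [abs_mul, abs_of_pos hμ1']
        _ ≤ _ := mul_le_mul (le_max_right _ _) hdist (abs_nonneg _) (by positivity)

theorem Icc_subset_closure_of_forall_comb_mem {S : Set ℝ} {μ : ℝ} (hμ0 : 0 < μ) (hμ1 : μ < 1)
    (h0 : 0 ∈ S) (h1 : 1 ∈ S) (hS : ∀ x ∈ S, ∀ y ∈ S, μ * x + (1 - μ) * y ∈ S) :
    Icc 0 1 ⊆ closure S := by
  intro u hu
  refine Metric.mem_closure_iff.2 fun ε hε => ?_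
  obtain ⟨k, hk⟩ := exists_pow_lt_of_lt_one hε (max_lt hμ1 (by linarith : 1 - μ < 1))
  obtain ⟨z, hz, hdist⟩ := exists_abs_sub_le_pow_of_forall_comb_mem hμ0 hμ1 h0 h1 hS k u hu
  exact ⟨z, hz, (Real.dist_eq u z).trans_le hdist |>.trans_lt hk⟩

theorem exists_mem_sub_mul_mem_Ioo {S : Set ℝ} (hS : Icc 0 1 ⊆ closure S) {a t r : ℝ}
    (ha : 0 < a) (ht : 0 < t) (hr : r ∈ Ioo 0 (a + t)) :
    ∃ c ∈ S, 0 ≤ c ∧ r - a * c ∈ Ioo 0 t := by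
  set lo := max 0 ((r - t) / a)
  set hi := min 1 (r / a)
  have hlohi : lo < hi :=
    max_lt (lt_min one_pos (div_pos hr.1 ha)) (lt_min ((div_lt_one ha).2 (by linarith [hr.2]))
      ((div_lt_div_iff_of_pos_right ha).2 (by linarith)))
  have hlo : 0 ≤ lo := le_max_left _ _
  have hhi : hi ≤ 1 := min_le_left _ _
  obtain ⟨c, hc, hcS⟩ : (Ioo lo hi ∩ S).Nonempty :=
    mem_closure_iff.1 (hS (⟨by linarith, by linarith⟩ : (lo + hi) / 2 ∈ Icc 0 1)) _ isOpen_Ioo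
      ⟨by linarith, by linarith⟩
  have hclo : (r - t) / a < c := (le_max_right _ _).trans_lt hc.1
  have hchi : c < r / a := hc.2.trans_le (min_le_right _ _)
  rw [div_lt_iff₀ ha] at hclo
  rw [lt_div_iff₀ ha] at hchi
  exact ⟨c, hcS, hlo.trans hc.1.le, by linarith, by linarith⟩

theorem exists_hasSum_mul_of_subset_closure {a : ℕ → ℝ} {s : ℝ} (ha : ∀ n, 0 < a n)
    (hs : HasSum a s) {S : Set ℝ} (hS : Icc 0 1 ⊆ closure S) {u : ℝ} (hu : u ∈ Ioo 0 s) :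
    ∃ w : ℕ → ℝ, (∀ n, w n ∈ S) ∧ HasSum (fun n => a n * w n) u := by
  set τ : ℕ → ℝ := fun n => s - ∑ i ∈ Finset.range n, a i with hτ
  obtain ⟨c₀, hc₀⟩ := closure_nonempty_iff.1 ⟨0, hS ⟨le_rfl, zero_le_one⟩⟩
  have step : ∀ n r, ∃ c ∈ S, r ∈ Ioo 0 (τ n) → 0 ≤ c ∧ r - a n * c ∈ Ioo 0 (τ (n + 1)) := by
    intro n r
    by_cases hr : r ∈ Ioo 0 (τ n)
    · have hτn : τ n = a n + τ (n + 1) := by simp only [hτ, Finset.sum_range_succ]; ring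
      rw [hτn] at hr
      obtain ⟨c, hcS, hc⟩ := exists_mem_sub_mul_mem_Ioo hS (ha n) (sub_sum_range_pos ha hs _) hr
      exact ⟨c, hcS, fun _ => hc⟩
    · exact ⟨c₀, hc₀, fun h => (hr h).elim⟩
  choose c hcS hc using step
  let r : ℕ → ℝ := fun n => Nat.rec u (fun k rk => rk - a k * c k rk) n
  have hr : ∀ n, r n ∈ Ioo 0 (τ n) := by
    intro n
    induction n with
    | zero => simpa [r, hτ] using hu
    | succ n ih => exact (hc n (r n) ih).2
  refine ⟨fun n => c n (r n), fun n => hcS n (r n), ?_⟩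
  have hpartial : ∀ n, ∑ i ∈ Finset.range n, a i * c i (r i) = u - r n := by
    intro n
    induction n with
    | zero => simp [r]
    | succ n ih => rw [Finset.sum_range_succ, ih]; simp only [r]; ring
  have hτ0 : Tendsto τ atTop (𝓝 0) := by
    simpa using (tendsto_const_nhds (x := s)).sub hs.tendsto_sum_nat
  have hr0 : Tendsto r atTop (𝓝 0) :=
    squeeze_zero (fun n => (hr n).1.le) (fun n => (hr n).2.le) hτ0
  refine (hasSum_iff_tendsto_nat_of_nonneg
    (fun n => mul_nonneg (ha n).le (hc n (r n) (hr n)).1) u).2 ?_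
  simpa [hpartial] using tendsto_const_nhds.sub hr0

theorem Icc_subset_of_forall_hasSum_mem {a : ℕ → ℝ} (ha : ∀ n, 0 < a n) (hs : HasSum a 1)
    {S : Set ℝ} (h0 : 0 ∈ S) (h1 : 1 ∈ S)
    (hS : ∀ (w : ℕ → ℝ) u, (∀ n, w n ∈ S) → HasSum (fun n => a n * w n) u → u ∈ S) :
    Icc 0 1 ⊆ S := by
  have ha0 : a 0 < 1 := by simpa using sub_sum_range_pos ha hs 1
  have hcomb : ∀ x ∈ S, ∀ y ∈ S, a 0 * x + (1 - a 0) * y ∈ S := by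
    intro x hx y hy
    refine hS (Function.update (fun _ => y) 0 x) _ ?_ ?_
    · intro n
      rcases eq_or_ne n 0 with rfl | hn <;> simp [*]
    · have hterms : (fun n => a n * Function.update (fun _ => y) 0 x n)
          = Function.update (fun n => a n * y) 0 (a 0 * x) := by
        ext n
        rcases eq_or_ne n 0 with rfl | hn <;> simp [*]
      rw [hterms, show a 0 * x + (1 - a 0) * y = a 0 * x - a 0 * y + 1 * y by ring]
      exact (hs.mul_right y).update 0 (a 0 * x)
  have hdense := Icc_subset_closure_of_forall_comb_mem (ha 0) ha0 h0 h1 hcomb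
  rintro u ⟨hu0, hu1⟩
  rcases hu0.eq_or_lt with rfl | hu0
  · exact h0
  rcases hu1.eq_or_lt with rfl | hu1
  · exact h1
  obtain ⟨w, hwS, hw⟩ := exists_hasSum_mul_of_subset_closure ha hs hdense ⟨hu0, hu1⟩
  exact hS w u hwS hw

theorem convexOn_of_forall_hasSum_le {E : Type*} [AddCommGroup E] [Module ℝ E]
    [TopologicalSpace E] [ContinuousAdd E] [ContinuousSMul ℝ E]
    {D : Set E} {f : E → ℝ} (hD : Convex ℝ D) (hf0 : ∀ x ∈ D, 0 ≤ f x)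
    {a : ℕ → ℝ} (ha : ∀ n, 0 < a n) (hs : HasSum a 1)
    (hJ : ∀ x : ℕ → E, (∀ n, x n ∈ D) → ∀ z L, HasSum (fun n => a n • x n) z →
      HasSum (fun n => a n * f (x n)) L → f z ≤ L) :
    ConvexOn ℝ D f := by
  refine ⟨hD, fun x hx y hy s t hs0 _ hst => ?_⟩
  let S : Set ℝ := {θ ∈ Icc 0 1 | f (θ • x + (1 - θ) • y) ≤ θ * f x + (1 - θ) * f y}
  suffices hS : Icc 0 1 ⊆ S by
    obtain ⟨-, h⟩ := hS ⟨hs0, by linarith⟩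
    rwa [show 1 - s = t by linarith] at h
  refine Icc_subset_of_forall_hasSum_mem ha hs ⟨⟨le_rfl, zero_le_one⟩, by simp⟩
    ⟨⟨zero_le_one, le_rfl⟩, by simp⟩ fun w u hwS hw => ?_
  have hw0 : ∀ n, 0 ≤ w n := fun n => (hwS n).1.1
  have hw1 : ∀ n, w n ≤ 1 := fun n => (hwS n).1.2
  have hu : u ∈ Icc 0 1 :=
    ⟨hasSum_le (fun n => mul_nonneg (ha n).le (hw0 n)) hasSum_zero hw,
      hasSum_le (fun n => mul_le_of_le_one_right (ha n).le (hw1 n)) hw hs⟩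
  let p : ℕ → E := fun n => w n • x + (1 - w n) • y
  have hpD : ∀ n, p n ∈ D := fun n => hD hx hy (hw0 n) (sub_nonneg.2 (hw1 n)) (by ring)
  have hp : HasSum (fun n => a n • p n) (u • x + (1 - u) • y) := by
    refine ((hw.smul_const x).add ((hs.sub hw).smul_const y)).congr_fun fun n => ?_
    simp only [p]
    module
  let g : ℕ → ℝ := fun n => a n * (w n * f x + (1 - w n) * f y)
  have hg : HasSum g (u * f x + (1 - u) * f y) := by
    refine ((hw.mul_right (f x)).add ((hs.sub hw).mul_right (f y))).congr_fun fun n => ?_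
    ring
  have hfp : ∀ n, a n * f (p n) ≤ g n :=
    fun n => mul_le_mul_of_nonneg_left (hwS n).2 (ha n).le
  have hfp0 : ∀ n, 0 ≤ a n * f (p n) := fun n => mul_nonneg (ha n).le (hf0 _ (hpD n))
  have hsum : Summable fun n => a n * f (p n) := hg.summable.of_nonneg_of_le hfp0 hfp
  exact ⟨hu, (hJ p hpD _ _ hp hsum.hasSum).trans (hasSum_le hfp hsum.hasSum hg)⟩

theorem tendsto_centerMass_range {E : Type*} [AddCommGroup E] [Module ℝ E] [TopologicalSpace E]
    [ContinuousSMul ℝ E] {a : ℕ → ℝ} {s : ℝ} (hs : HasSum a s) (hs0 : s ≠ 0) {x : ℕ → E} {z : E}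
    (hz : HasSum (fun n => a n • x n) z) :
    Tendsto (fun N => (Finset.range N).centerMass a x) atTop (𝓝 (s⁻¹ • z)) :=
  (hs.tendsto_sum_nat.inv₀ hs0).smul hz.tendsto_sum_nat

theorem Convex.mem_of_hasSum_smul {E : Type*} [AddCommGroup E] [Module ℝ E] [TopologicalSpace E]
    [ContinuousSMul ℝ E] {D : Set E} (hD : Convex ℝ D) (hDc : IsClosed D) {a : ℕ → ℝ}
    (ha : ∀ n, 0 < a n) (hs : HasSum a 1) {x : ℕ → E} (hx : ∀ n, x n ∈ D) {z : E}
    (hz : HasSum (fun n => a n • x n) z) : z ∈ D := by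
  refine hDc.mem_of_tendsto (by simpa using tendsto_centerMass_range hs one_ne_zero hz) ?_
  filter_upwards [eventually_gt_atTop 0] with N hN
  exact hD.centerMass_mem (fun i _ => (ha i).le)
    (Finset.sum_pos (fun i _ => ha i) (Finset.nonempty_range_iff.2 hN.ne')) fun i _ => hx i

theorem Convex.zero_mem_interior_of_hasSum {V : Type*} [NormedAddCommGroup V] [NormedSpace ℝ V]
    [FiniteDimensional ℝ V] {C : Set V} (hC : Convex ℝ C) (h0 : (0 : V) ∈ C) {a : ℕ → ℝ}
    (ha : ∀ n, 0 < a n) {v : ℕ → V} (hv : ∀ n, v n ∈ C)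
    (hspan : Submodule.span ℝ (range v) = ⊤) (hsum : HasSum (fun n => a n • v n) 0) :
    (0 : V) ∈ interior C := by
  have hint : (interior C).Nonempty := by
    rw [hC.interior_nonempty_iff_affineSpan_eq_top,
      ← AffineSubspace.direction_eq_top_iff_of_nonempty ⟨0, subset_affineSpan ℝ C h0⟩,
      direction_affineSpan, eq_top_iff, ← hspan, Submodule.span_le]
    rintro _ ⟨n, rfl⟩
    simpa using vsub_mem_vectorSpan ℝ (hv n) h0
  by_contra hnot
  obtain ⟨ℓ, hℓ⟩ := geometric_hahn_banach_open_point hC.interior isOpen_interior hnot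
  have hℓC : ∀ y ∈ C, ℓ y ≤ 0 := by
    intro y hy
    have hy' : y ∈ closure (interior C) := by
      rw [hC.closure_interior_eq_closure_of_nonempty_interior hint]
      exact subset_closure hy
    exact closure_minimal (fun y hy => by simpa using (hℓ y hy).le)
      (isClosed_le ℓ.continuous continuous_const) hy'
  have hℓv : ∀ n, ℓ (v n) = 0 := by
    have hnonneg : ∀ n, 0 ≤ -(a n * ℓ (v n)) := fun n =>
      neg_nonneg.2 (mul_nonpos_of_nonneg_of_nonpos (ha n).le (hℓC _ (hv n)))
    have hzero := (hasSum_zero_iff_of_nonneg hnonneg).1 (by simpa using (ℓ.hasSum hsum).neg)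
    intro n
    simpa [(ha n).ne'] using congr_fun hzero n
  have hℓ0 : ℓ = 0 :=
    ContinuousLinearMap.coe_injective (LinearMap.ext_on_range hspan (by simpa using hℓv))
  obtain ⟨y, hy⟩ := hint
  simpa [hℓ0] using hℓ y hy

theorem ConvexOn.map_zero_le_of_hasSum {V : Type*} [NormedAddCommGroup V] [NormedSpace ℝ V]
    [FiniteDimensional ℝ V] {C : Set V} {F : V → ℝ} (hF : ConvexOn ℝ C F) (h0 : (0 : V) ∈ C)
    {a : ℕ → ℝ} (ha : ∀ n, 0 < a n) (hs : HasSum a 1) {v : ℕ → V} (hv : ∀ n, v n ∈ C)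
    (hspan : Submodule.span ℝ (range v) = ⊤) (hsum : HasSum (fun n => a n • v n) 0) {L : ℝ}
    (hL : HasSum (fun n => a n * F (v n)) L) : F 0 ≤ L := by
  have hcont : ContinuousAt F 0 := hF.continuousOn_interior.continuousAt
    (isOpen_interior.mem_nhds (hF.1.zero_mem_interior_of_hasSum h0 ha hv hspan hsum))
  refine le_of_tendsto_of_tendsto
    (hcont.tendsto.comp (by simpa using tendsto_centerMass_range hs one_ne_zero hsum))
    (by simpa using tendsto_centerMass_range hs one_ne_zero (x := F ∘ v) hL) ?_
  filter_upwards [eventually_gt_atTop 0] with N hN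
  exact hF.map_centerMass_le (fun i _ => (ha i).le)
    (Finset.sum_pos (fun i _ => ha i) (Finset.nonempty_range_iff.2 hN.ne')) fun i _ => hv i

theorem ConvexOn.le_of_hasSum {E : Type*} [NormedAddCommGroup E] [NormedSpace ℝ E]
    [FiniteDimensional ℝ E] {D : Set E} {f : E → ℝ} (hf : ConvexOn ℝ D f) {a : ℕ → ℝ}
    (ha : ∀ n, 0 < a n) (hs : HasSum a 1) {x : ℕ → E} (hx : ∀ n, x n ∈ D) {z : E} (hzD : z ∈ D)
    (hz : HasSum (fun n => a n • x n) z) {L : ℝ} (hL : HasSum (fun n => a n * f (x n)) L) :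
    f z ≤ L := by
  let V := Submodule.span ℝ (range fun n => x n - z)
  let v : ℕ → V := fun n => ⟨x n - z, Submodule.subset_span ⟨n, rfl⟩⟩
  have hF : ConvexOn ℝ {w : V | z + w ∈ D} (fun w => f (z + w)) :=
    (hf.translate_right z).comp_linearMap V.subtype
  have hspan : Submodule.span ℝ (range v) = ⊤ := by
    convert Submodule.span_span_coe_preimage (R := ℝ) (s := range fun n => x n - z)
    ext w
    exact ⟨by rintro ⟨n, rfl⟩; exact ⟨n, rfl⟩, by rintro ⟨n, hn⟩; exact ⟨n, Subtype.ext hn⟩⟩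
  have hsum : HasSum (fun n => a n • v n) 0 := by
    rw [← Topology.IsInducing.subtypeVal.hasSum_iff (g := V.subtype)]
    simpa [v, smul_sub, Function.comp_def] using hz.sub (hs.smul_const z)
  simpa [v] using hF.map_zero_le_of_hasSum (by simpa using hzD) ha hs
    (fun n => by simpa [v] using hx n) hspan hsum (by simpa [v] using hL)

theorem stmt_2_general (lam : ℕ → ℝ) (hpos : ∀ n, 0 < lam n)
    (hsum : HasSum lam 1) (d : ℕ) (D : Set (EuclideanSpace ℝ (Fin d)))
    (hcomp : IsCompact D) (hconv : Convex ℝ D) (f : EuclideanSpace ℝ (Fin d) → ℝ)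
    (hf0 : ∀ x ∈ D, 0 ≤ f x) :
    (∀ x : ℕ → EuclideanSpace ℝ (Fin d), (∀ i, x i ∈ D) →
      ENNReal.ofReal (f (∑' i, lam i • x i)) ≤ ∑' i, ENNReal.ofReal (lam i * f (x i))) ↔
      ConvexOn ℝ D f := by
  have hterms : ∀ x : ℕ → EuclideanSpace ℝ (Fin d), (∀ i, x i ∈ D) →
      ∀ i, 0 ≤ lam i * f (x i) := fun x hx i => mul_nonneg (hpos i).le (hf0 _ (hx i))
  constructor
  · intro hJ
    refine convexOn_of_forall_hasSum_le hconv hf0 hpos hsum fun x hx z L hz hL => ?_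
    have h := hJ x hx
    rw [hz.tsum_eq, ← ENNReal.ofReal_tsum_of_nonneg (hterms x hx) hL.summable, hL.tsum_eq] at h
    exact (ENNReal.ofReal_le_ofReal_iff (hL.nonneg (hterms x hx))).1 h
  · intro hf x hx
    by_cases htop : ∑' i, ENNReal.ofReal (lam i * f (x i)) = ⊤
    · exact htop ▸ le_top
    have hfin : Summable fun i => lam i * f (x i) := by
      simpa [ENNReal.toReal_ofReal (hterms x hx _)] using ENNReal.summable_toReal htop
    obtain ⟨C, hC⟩ := hcomp.isBounded.exists_norm_le
    have hxs : Summable fun i => lam i • x i := .of_norm_bounded (hsum.summable.mul_right C)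
      fun i => by
        rw [norm_smul, Real.norm_of_nonneg (hpos i).le]
        exact mul_le_mul_of_nonneg_left (hC _ (hx i)) (hpos i).le
    have hzD := hconv.mem_of_hasSum_smul hcomp.isClosed hpos hsum hx hxs.hasSum
    rw [← ENNReal.ofReal_tsum_of_nonneg (hterms x hx) hfin]
    exact ENNReal.ofReal_le_ofReal (hf.le_of_hasSum hpos hsum hx hzD hxs.hasSum hfin.hasSum)

/-- Daróczy–Páles: for `(λ_n) ∈ Λ`, a compact convex `D ⊆ ℝ^d` and a nonnegative
`f : D → ℝ₊`, the infinite Jensen inequality holds for all sequences in `D` iff `f` is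
convex.  The right-hand side is interpreted in `[0,∞]` (it may diverge to `+∞`). -/
theorem stmt_2 (lam : ℕ → ℝ) (hpos : ∀ n, 0 < lam n) (hanti : Antitone lam)
    (hsum : HasSum lam 1) (d : ℕ) (D : Set (EuclideanSpace ℝ (Fin d)))
    (hcomp : IsCompact D) (hconv : Convex ℝ D) (f : EuclideanSpace ℝ (Fin d) → ℝ)
    (hf0 : ∀ x ∈ D, 0 ≤ f x) :
    (∀ x : ℕ → EuclideanSpace ℝ (Fin d), (∀ i, x i ∈ D) →
      ENNReal.ofReal (f (∑' i, lam i • x i)) ≤ ∑' i, ENNReal.ofReal (lam i * f (x i))) ↔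
      ConvexOn ℝ D f :=
  stmt_2_general lam hpos hsum d D hcomp hconv f hf0
end

section
/- Let a, b ∈ ℝ with a < b, and let f : [a,b] → ℝ be a convex function. Let x_i ∈ [a,b], i ∈ ℕ, and λ_i ≥ 0, i ∈ ℕ, be such that ∑_{i=1}^∞ λ_i = 1, and let t ∈ [0,1] be such that ∑_{i=1}^∞ λ_i x_i = t·a + (1−t)·b. Then f(t·a + (1−t)·b) = f(∑_{i=1}^∞ λ_i x_i) ≤ ∑_{i=1}^∞ λ_i f(x_i) ≤ t·f(a) + (1−t)·f(b). -/
/-!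
The middle inequality is Jensen's inequality for series. If `c = ∑ λᵢ xᵢ` lies in the interior
`(a, b)`, integrate the supporting line `y ↦ f c + m (y - c)` (with `m` the right derivative of `f`
at `c`) against the weights. If `c` is an endpoint, say `a`, then every `xᵢ` carrying positive
weight equals `a`, and both sides are `f a`. The last inequality integrates the chord bound
`f y ≤ f a + (f b - f a) / (b - a) * (y - a)` in the same way. Summability of `∑ λᵢ f (xᵢ)` comes
from squeezing `f` between a supporting line and the chord.
-/

open Set

variable {ι : Type*}

theorem Summable.of_le_of_le {f g h : ι → ℝ} (hg : Summable g) (hh : Summable h)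
    (hgf : ∀ i, g i ≤ f i) (hfh : ∀ i, f i ≤ h i) : Summable f := by
  have hdiff : Summable fun i => f i - g i :=
    (hh.sub hg).of_nonneg_of_le (fun i => sub_nonneg.2 (hgf i)) fun i => by linarith [hfh i]
  simpa using hg.add hdiff

section WeightedSeries

variable {lam x : ι → ℝ} {a b c : ℝ}

theorem HasSum.mul_affine (hlam : HasSum lam 1) (hx : HasSum (fun i => lam i * x i) c)
    (α β d : ℝ) : HasSum (fun i => lam i * (α + β * (x i - d))) (α + β * (c - d)) := by
  have hterm : (fun i => lam i * (α + β * (x i - d)))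
      = fun i => lam i * (α - β * d) + β * (lam i * x i) := by
    funext i
    ring
  rw [hterm, show α + β * (c - d) = 1 * (α - β * d) + β * c by ring]
  exact (hlam.mul_right _).add (hx.mul_left β)

theorem summable_mul_of_mem_Icc (hlam0 : ∀ i, 0 ≤ lam i) (hlam : Summable lam)
    (hx : ∀ i, x i ∈ Icc a b) : Summable fun i => lam i * x i :=
  (hlam.mul_right a).of_le_of_le (hlam.mul_right b)
    (fun i => mul_le_mul_of_nonneg_left (hx i).1 (hlam0 i))
    (fun i => mul_le_mul_of_nonneg_left (hx i).2 (hlam0 i))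

theorem mem_Icc_of_hasSum_mul (hlam0 : ∀ i, 0 ≤ lam i) (hlam : HasSum lam 1)
    (hx : ∀ i, x i ∈ Icc a b) (hc : HasSum (fun i => lam i * x i) c) : c ∈ Icc a b :=
  ⟨hasSum_le (fun i => mul_le_mul_of_nonneg_left (hx i).1 (hlam0 i))
      (by simpa using hlam.mul_right a) hc,
    hasSum_le (fun i => mul_le_mul_of_nonneg_left (hx i).2 (hlam0 i)) hc
      (by simpa using hlam.mul_right b)⟩

theorem hasSum_mul_comp_of_le_of_hasSum (hlam0 : ∀ i, 0 ≤ lam i) (hlam : HasSum lam 1)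
    (hxa : ∀ i, a ≤ x i) (hx : HasSum (fun i => lam i * x i) a) (g : ℝ → ℝ) :
    HasSum (fun i => lam i * g (x i)) (g a) := by
  have hdev : HasSum (fun i => lam i * (x i - a)) 0 := by
    simpa [mul_sub] using hx.sub (hlam.mul_right a)
  have hzero := (hasSum_zero_iff_of_nonneg
    fun i => mul_nonneg (hlam0 i) (sub_nonneg.2 (hxa i))).1 hdev
  have hconst : (fun i => lam i * g (x i)) = fun i => lam i * g a := by
    funext i
    rcases mul_eq_zero.1 (congrFun hzero i) with h | h
    · simp [h]
    · rw [sub_eq_zero.1 h]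
  simpa [hconst] using hlam.mul_right (g a)

theorem hasSum_mul_comp_of_ge_of_hasSum (hlam0 : ∀ i, 0 ≤ lam i) (hlam : HasSum lam 1)
    (hxb : ∀ i, x i ≤ b) (hx : HasSum (fun i => lam i * x i) b) (g : ℝ → ℝ) :
    HasSum (fun i => lam i * g (x i)) (g b) := by
  simpa using hasSum_mul_comp_of_le_of_hasSum (x := fun i => -x i) hlam0 hlam
    (fun i => neg_le_neg (hxb i)) (by simpa using hx.neg) fun y => g (-y)

end WeightedSeries

namespace ConvexOn

variable {f : ℝ → ℝ} {a b c y : ℝ}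

theorem le_add_rightDeriv_mul_sub {S : Set ℝ} (hf : ConvexOn ℝ S f) (hc : c ∈ interior S)
    (hy : y ∈ S) : f c + derivWithin f (Ioi c) c * (y - c) ≤ f y := by
  rcases lt_trichotomy y c with hyc | rfl | hcy
  · have h := (hf.slope_le_leftDeriv_of_mem_interior hy hc hyc).trans
      (hf.leftDeriv_le_rightDeriv_of_mem_interior hc)
    rw [slope_def_field, div_le_iff₀ (sub_pos.2 hyc)] at h
    linarith
  · simp
  · have h := hf.rightDeriv_le_slope_of_mem_interior hc hy hcy
    rw [slope_def_field, le_div_iff₀ (sub_pos.2 hcy)] at h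
    linarith

theorem le_chord (hf : ConvexOn ℝ (Icc a b) f) (hab : a < b) (hy : y ∈ Icc a b) :
    f y ≤ f a + (f b - f a) / (b - a) * (y - a) := by
  have hba : 0 < b - a := sub_pos.2 hab
  have h := hf.2 (left_mem_Icc.2 hab.le) (right_mem_Icc.2 hab.le)
    (div_nonneg (sub_nonneg.2 hy.2) hba.le) (div_nonneg (sub_nonneg.2 hy.1) hba.le)
    (by field_simp [hba.ne']; ring)
  have hpt : ((b - y) / (b - a)) • a + ((y - a) / (b - a)) • b = y := by
    simp only [smul_eq_mul]
    field_simp [hba.ne']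
    ring
  rw [hpt, smul_eq_mul, smul_eq_mul] at h
  refine h.trans_eq ?_
  field_simp [hba.ne']
  ring

variable {lam x : ι → ℝ} {s : ℝ}

theorem summable_mul_comp (hf : ConvexOn ℝ (Icc a b) f) (hab : a < b) (hlam0 : ∀ i, 0 ≤ lam i)
    (hlam : HasSum lam 1) (hx : ∀ i, x i ∈ Icc a b) : Summable fun i => lam i * f (x i) := by
  obtain ⟨c, hc⟩ := summable_mul_of_mem_Icc hlam0 hlam.summable hx
  have hmid : (a + b) / 2 ∈ interior (Icc a b) := by
    rw [interior_Icc]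
    constructor <;> linarith
  exact (hlam.mul_affine hc _ _ _).summable.of_le_of_le (hlam.mul_affine hc _ _ _).summable
    (fun i => mul_le_mul_of_nonneg_left (hf.le_add_rightDeriv_mul_sub hmid (hx i)) (hlam0 i))
    (fun i => mul_le_mul_of_nonneg_left (hf.le_chord hab (hx i)) (hlam0 i))

theorem map_le_of_hasSum (hf : ConvexOn ℝ (Icc a b) f) (hlam0 : ∀ i, 0 ≤ lam i)
    (hlam : HasSum lam 1) (hx : ∀ i, x i ∈ Icc a b) (hc : HasSum (fun i => lam i * x i) c)
    (hs : HasSum (fun i => lam i * f (x i)) s) : f c ≤ s := by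
  obtain ⟨hac, hcb⟩ := mem_Icc_of_hasSum_mul hlam0 hlam hx hc
  rcases hac.eq_or_lt with rfl | hac
  · exact ((hasSum_mul_comp_of_le_of_hasSum hlam0 hlam (fun i => (hx i).1) hc f).unique hs).le
  rcases hcb.eq_or_lt with rfl | hcb
  · exact ((hasSum_mul_comp_of_ge_of_hasSum hlam0 hlam (fun i => (hx i).2) hc f).unique hs).le
  have hint : c ∈ interior (Icc a b) := by
    rw [interior_Icc]
    exact ⟨hac, hcb⟩
  simpa using hasSum_le
    (fun i => mul_le_mul_of_nonneg_left (hf.le_add_rightDeriv_mul_sub hint (hx i)) (hlam0 i))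
    (hlam.mul_affine hc _ _ _) hs

theorem le_chord_of_hasSum (hf : ConvexOn ℝ (Icc a b) f) (hab : a < b) (hlam0 : ∀ i, 0 ≤ lam i)
    (hlam : HasSum lam 1) (hx : ∀ i, x i ∈ Icc a b) (hc : HasSum (fun i => lam i * x i) c)
    (hs : HasSum (fun i => lam i * f (x i)) s) :
    s ≤ f a + (f b - f a) / (b - a) * (c - a) :=
  hasSum_le (fun i => mul_le_mul_of_nonneg_left (hf.le_chord hab (hx i)) (hlam0 i)) hs
    (hlam.mul_affine hc _ _ _)

end ConvexOn

theorem stmt_3_general (a b : ℝ) (hab : a < b) (f : ℝ → ℝ)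
    (hf : ConvexOn ℝ (Set.Icc a b) f) (x : ℕ → ℝ) (hx : ∀ i, x i ∈ Set.Icc a b)
    (lam : ℕ → ℝ) (hlam : ∀ i, 0 ≤ lam i) (hsum : HasSum lam 1)
    (t : ℝ)
    (htx : ∑' i, lam i * x i = t * a + (1 - t) * b) :
    f (t * a + (1 - t) * b) = f (∑' i, lam i * x i) ∧
    f (∑' i, lam i * x i) ≤ ∑' i, lam i * f (x i) ∧
    ∑' i, lam i * f (x i) ≤ t * f a + (1 - t) * f b := by
  obtain ⟨c, hc⟩ := summable_mul_of_mem_Icc hlam hsum.summable hx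
  obtain ⟨s, hs⟩ := hf.summable_mul_comp hab hlam hsum hx
  rw [hc.tsum_eq] at htx
  rw [← htx, hc.tsum_eq, hs.tsum_eq]
  refine ⟨rfl, hf.map_le_of_hasSum hlam hsum hx hc hs, ?_⟩
  calc s ≤ f a + (f b - f a) / (b - a) * (c - a) := hf.le_chord_of_hasSum hab hlam hsum hx hc hs
    _ = t * f a + (1 - t) * f b := by
      rw [htx]
      field_simp [(sub_pos.2 hab).ne']
      ring

/-- Pavić's theorem: for a convex `f : [a,b] → ℝ`, points `x_i ∈ [a,b]`, weights
`λ_i ≥ 0` with `∑ λ_i = 1`, and `t ∈ [0,1]` with `∑ λ_i x_i = t·a + (1−t)·b`, we have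
`f(t·a+(1−t)·b) = f(∑ λ_i x_i) ≤ ∑ λ_i f(x_i) ≤ t·f(a) + (1−t)·f(b)`. -/
theorem stmt_3 (a b : ℝ) (hab : a < b) (f : ℝ → ℝ)
    (hf : ConvexOn ℝ (Set.Icc a b) f) (x : ℕ → ℝ) (hx : ∀ i, x i ∈ Set.Icc a b)
    (lam : ℕ → ℝ) (hlam : ∀ i, 0 ≤ lam i) (hsum : HasSum lam 1)
    (t : ℝ) (ht : t ∈ Set.Icc (0 : ℝ) 1)
    (htx : ∑' i, lam i * x i = t * a + (1 - t) * b) :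
    f (t * a + (1 - t) * b) = f (∑' i, lam i * x i) ∧
    f (∑' i, lam i * x i) ≤ ∑' i, lam i * f (x i) ∧
    ∑' i, lam i * f (x i) ≤ t * f a + (1 - t) * f b :=
  stmt_3_general a b hab f hf x hx lam hlam hsum t htx
end

section
/- Let λ_i ≥ 0, i ∈ ℕ, be such that ∑_{i=1}^∞ λ_i = 1. Let d ∈ ℕ, let D ⊆ ℝ^d be a convex set, and let x_i ∈ D, i ∈ ℕ, be such that ∑_{i=1}^∞ λ_i ‖x_i‖ < ∞. Then ∑_{i=1}^∞ λ_i x_i converges to a point of D, and for every convex function f : D → ℝ, f(∑_{i=1}^∞ λ_i x_i) ≤ ∑_{i=1}^∞ λ_i f(x_i), where the right-hand side is either a convergent series or diverges to +∞. -/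
/-!
Let `p = ∑ λᵢ xᵢ`, let `C` be the convex hull of the `xᵢ` with `λᵢ ≠ 0`, and let `V` be the span
of the `xᵢ - p`. The partial centre masses of the `xᵢ` lie in `C` and tend to `p`, so `p` lies in
the closure of `C`, and `C` has nonempty interior in `p + V`. If `p` were not in that interior, a
separating functional would be at most its value at `p` at every `xᵢ` while averaging to exactly
that value; it would then be constant on `p + V`, which is absurd. So `p` lies in the relative
interior of `C ⊆ D`. Applied to the points `(xᵢ, f xᵢ)` of the epigraph this is Jensen's
inequality. Near `p` inside `p + V` the function `f` is continuous, hence has an affine minorant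
there; it bounds `λᵢ f xᵢ` below by a summable sequence, which gives the dichotomy.
-/

open Filter Set Topology Function

theorem hasSum_mem_closure_convexHull {E : Type*} [AddCommGroup E] [Module ℝ E]
    [TopologicalSpace E] [IsTopologicalAddGroup E] [ContinuousSMul ℝ E]
    {lam : ℕ → ℝ} (hlam₀ : ∀ i, 0 ≤ lam i) (hlam₁ : HasSum lam 1) {y : ℕ → E} {p : E}
    (hy : HasSum (fun i => lam i • y i) p) :
    p ∈ closure (convexHull ℝ (y '' support lam)) := by
  have hs := hlam₁.tendsto_sum_nat
  have hq : Tendsto (fun n => (Finset.range n).centerMass lam y) atTop (𝓝 p) := by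
    simpa [Finset.centerMass] using (hs.inv₀ one_ne_zero).smul hy.tendsto_sum_nat
  refine mem_closure_of_tendsto hq ?_
  filter_upwards [hs.eventually (eventually_gt_nhds one_pos)] with n hn
  rw [← Finset.centerMass_filter_ne_zero]
  refine Finset.centerMass_mem_convexHull _ (fun i _ => hlam₀ i)
    (by rwa [Finset.sum_filter_ne_zero]) fun i hi => ?_
  exact mem_image_of_mem _ (Finset.mem_filter.1 hi).2

theorem ConvexOn.exists_affine_le {E : Type*} [NormedAddCommGroup E] [NormedSpace ℝ E]
    {D : Set E} {f : E → ℝ} (hf : ConvexOn ℝ D f) {z : E} (hz : z ∈ interior D)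
    (hcont : ContinuousAt f z) :
    ∃ (g : StrongDual ℝ E) (c : ℝ), ∀ w ∈ D, g w + c ≤ f w := by
  set epi := {q : E × ℝ | q.1 ∈ D ∧ f q.1 ≤ q.2}
  have hepi : Convex ℝ epi := hf.convex_epigraph
  have hint : (z, f z + 1) ∈ interior epi := by
    have hnear : ∀ᶠ w in 𝓝 z, w ∈ D ∧ f w < f z + 1 / 2 :=
      Filter.Eventually.and (mem_interior_iff_mem_nhds.1 hz)
        (hcont.eventually (eventually_lt_nhds (by linarith)))
    rw [mem_interior_iff_mem_nhds]
    filter_upwards [hnear.prod_nhds (eventually_gt_nhds (by linarith : f z + 1 / 2 < f z + 1))]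
      with q hq
    exact ⟨hq.1.1, by linarith [hq.1.2, hq.2]⟩
  have hout : (z, f z - 1) ∉ interior epi := fun h => by
    linarith [(interior_subset h : (z, f z - 1) ∈ epi).2]
  -- Separate a point below the graph from the epigraph; since `(z, f z + 1)` is an interior
  -- point, the separating functional decreases in the last coordinate.
  obtain ⟨ℓ, hℓ⟩ := geometric_hahn_banach_open_point hepi.interior isOpen_interior hout
  have hle : ∀ q ∈ epi, ℓ q ≤ ℓ (z, f z - 1) := by
    intro q hq
    refine closure_minimal (fun a ha => (hℓ a ha).le) (isClosed_Iic.preimage ℓ.continuous) ?_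
    rw [hepi.closure_interior_eq_closure_of_nonempty_interior ⟨_, hint⟩]
    exact subset_closure hq
  set s := ℓ (0, 1)
  have hsplit : ∀ w t, ℓ (w, t) = ℓ (w, 0) + t * s := fun w t => by
    have : ((w, t) : E × ℝ) = (w, 0) + t • (0, 1) := by simp
    rw [this, map_add, map_smul, smul_eq_mul]
  have hs : s < 0 := by
    have := hℓ _ hint
    rw [hsplit z (f z + 1), hsplit z (f z - 1)] at this
    linarith
  refine ⟨-s⁻¹ • ℓ.comp (ContinuousLinearMap.inl ℝ E ℝ), s⁻¹ * ℓ (z, 0) + (f z - 1),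
    fun w hw => ?_⟩
  have h := hle (w, f w) ⟨hw, le_rfl⟩
  rw [hsplit w, hsplit z (f z - 1)] at h
  have key : (ℓ (z, 0) - ℓ (w, 0)) / s + (f z - 1) ≤ f w := by
    rw [div_add' _ _ _ hs.ne, div_le_iff_of_neg hs]
    linarith
  calc _ = (ℓ (z, 0) - ℓ (w, 0)) / s + (f z - 1) := by
          simp only [smul_apply, ContinuousLinearMap.comp_apply, ContinuousLinearMap.inl_apply,
            smul_eq_mul]
          ring
    _ ≤ f w := key

theorem summable_or_tendsto_atTop_of_le {a m : ℕ → ℝ} (hm : Summable m) (hma : ∀ i, m i ≤ a i) :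
    Summable a ∨ Tendsto (fun n => ∑ i ∈ Finset.range n, a i) atTop atTop := by
  refine or_iff_not_imp_left.2 fun ha => ?_
  have hb : ¬ Summable (fun i => a i - m i) := fun hb => ha (by simpa using hb.add hm)
  have := ((not_summable_iff_tendsto_nat_atTop_of_nonneg fun i => sub_nonneg.2 (hma i)).1
    hb).atTop_add hm.hasSum.tendsto_sum_nat
  simpa [Finset.sum_sub_distrib] using this

section FiniteDimensional

variable {E : Type*} [NormedAddCommGroup E] [NormedSpace ℝ E] [FiniteDimensional ℝ E]

theorem zero_mem_interior_convexHull_of_hasSum {lam : ℕ → ℝ} (hlam₀ : ∀ i, 0 ≤ lam i)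
    (hlam₁ : HasSum lam 1) {y : ℕ → E} (hy : HasSum (fun i => lam i • y i) 0)
    (hspan : Submodule.span ℝ (y '' support lam) = ⊤) :
    (0 : E) ∈ interior (convexHull ℝ (y '' support lam)) := by
  have hC : (interior (convexHull ℝ (y '' support lam))).Nonempty := by
    have h0 : (0 : E) ∈ affineSpan ℝ (y '' support lam) := by
      refine closure_minimal ?_ (affineSpan ℝ _).closed_of_finiteDimensional
        (hasSum_mem_closure_convexHull hlam₀ hlam₁ hy)
      exact convexHull_min (subset_affineSpan ℝ _) (AffineSubspace.convex _)
    rw [(convex_convexHull ℝ _).interior_nonempty_iff_affineSpan_eq_top, affineSpan_convexHull,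
      ← affineSpan_insert_eq_affineSpan ℝ h0, ← AffineSubspace.coe_eq_univ_iff,
      affineSpan_insert_zero, hspan, Submodule.top_coe]
  by_contra h0
  obtain ⟨ℓ, u, hℓ, hℓC, hu⟩ := geometric_hahn_banach_of_nonempty_interior
    (convex_convexHull ℝ _) (convex_singleton 0) (disjoint_singleton_right.2 h0) hC
    (singleton_nonempty 0)
  have hnonpos : ∀ i, 0 ≤ -(lam i * ℓ (y i)) := fun i => by
    by_cases hi : lam i = 0
    · simp [hi]
    · have : ℓ (y i) ≤ 0 := by
        simpa using (hℓC _ (subset_convexHull ℝ _ (mem_image_of_mem y hi))).trans (hu 0 rfl)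
      exact neg_nonneg.2 (mul_nonpos_of_nonneg_of_nonpos (hlam₀ i) this)
  have hzero := (hasSum_zero_iff_of_nonneg hnonpos).1 (by simpa using (hy.mapL ℓ).neg)
  refine hℓ (ContinuousLinearMap.coe_injective (LinearMap.ext_on hspan ?_))
  rintro _ ⟨i, hi, rfl⟩
  simpa [mem_support.1 hi] using congrFun hzero i

theorem Convex.exists_submodule_zero_mem_interior_of_hasSum {D : Set E} (hD : Convex ℝ D)
    {lam : ℕ → ℝ} (hlam₀ : ∀ i, 0 ≤ lam i) (hlam₁ : HasSum lam 1) {y : ℕ → E}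
    (hyD : ∀ i ∈ support lam, y i ∈ D) {p : E} (hy : HasSum (fun i => lam i • y i) p) :
    ∃ V : Submodule ℝ E, (∀ i ∈ support lam, y i - p ∈ V) ∧
      (0 : V) ∈ interior {v : V | p + v ∈ D} := by
  classical
  set V := Submodule.span ℝ ((fun i => y i - p) '' support lam)
  have hyV : ∀ i ∈ support lam, y i - p ∈ V := fun i hi =>
    Submodule.subset_span (mem_image_of_mem _ hi)
  set z : ℕ → V := fun i => if hi : i ∈ support lam then ⟨y i - p, hyV i hi⟩ else 0
  have hz : ∀ i ∈ support lam, (z i : E) = y i - p := fun i hi => by simp [z, mem_support.1 hi]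
  have hsum : HasSum (fun i => lam i • z i) 0 := by
    have hcent : HasSum (fun i => lam i • (y i - p)) 0 := by
      simpa [smul_sub] using hy.sub (hlam₁.smul_const p)
    rw [← Topology.IsInducing.subtypeVal.hasSum_iff (g := V.subtype)]
    convert hcent using 1
    · funext i
      by_cases hi : lam i = 0
      · simp [hi]
      · simp [hz i hi]
    · exact map_zero _
  have hspan : Submodule.span ℝ (z '' support lam) = ⊤ := by
    convert Submodule.span_span_coe_preimage (R := ℝ) (s := (fun i => y i - p) '' support lam)
    ext v
    constructor
    · rintro ⟨i, hi, rfl⟩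
      exact ⟨i, hi, (hz i hi).symm⟩
    · rintro ⟨i, hi, hv⟩
      exact ⟨i, hi, Subtype.ext ((hz i hi).trans hv)⟩
  refine ⟨V, hyV, interior_mono ?_ (zero_mem_interior_convexHull_of_hasSum hlam₀ hlam₁ hsum hspan)⟩
  refine convexHull_min ?_ ((hD.translate_preimage_right p).linear_preimage V.subtype)
  rintro _ ⟨i, hi, rfl⟩
  simpa [hz i hi] using hyD i hi

theorem Convex.hasSum_mem {D : Set E} (hD : Convex ℝ D)
    {lam : ℕ → ℝ} (hlam₀ : ∀ i, 0 ≤ lam i) (hlam₁ : HasSum lam 1) {y : ℕ → E}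
    (hyD : ∀ i ∈ support lam, y i ∈ D) {p : E} (hy : HasSum (fun i => lam i • y i) p) :
    p ∈ D := by
  obtain ⟨V, -, h0⟩ := hD.exists_submodule_zero_mem_interior_of_hasSum hlam₀ hlam₁ hyD hy
  simpa using interior_subset h0

theorem ConvexOn.exists_sub_mul_norm_le_of_hasSum {D : Set E} {f : E → ℝ} (hf : ConvexOn ℝ D f)
    {lam : ℕ → ℝ} (hlam₀ : ∀ i, 0 ≤ lam i) (hlam₁ : HasSum lam 1) {y : ℕ → E}
    (hyD : ∀ i ∈ support lam, y i ∈ D) {p : E} (hy : HasSum (fun i => lam i • y i) p) :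
    ∃ c C : ℝ, ∀ i ∈ support lam, c - C * ‖y i‖ ≤ f (y i) := by
  obtain ⟨V, hyV, h0⟩ := hf.1.exists_submodule_zero_mem_interior_of_hasSum hlam₀ hlam₁ hyD hy
  have hfV : ConvexOn ℝ {v : V | p + v ∈ D} (fun v : V => f (p + v)) :=
    (hf.translate_right p).comp_linearMap V.subtype
  obtain ⟨g, c, hg⟩ := hfV.exists_affine_le h0
    (hfV.continuousOn_interior.continuousAt (isOpen_interior.mem_nhds h0))
  refine ⟨c - ‖g‖ * ‖p‖, ‖g‖, fun i hi => ?_⟩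
  have hgi := hg ⟨y i - p, hyV i hi⟩ (by simpa using hyD i hi)
  have hbound : |g ⟨y i - p, hyV i hi⟩| ≤ ‖g‖ * (‖y i‖ + ‖p‖) :=
    (g.le_opNorm _).trans (mul_le_mul_of_nonneg_left (norm_sub_le _ _) (norm_nonneg g))
  simp only [add_sub_cancel] at hgi
  nlinarith [neg_abs_le (g ⟨y i - p, hyV i hi⟩)]

end FiniteDimensional

/-- If `λ_i ≥ 0` with `∑ λ_i = 1`, `D ⊆ ℝ^d` convex, `x_i ∈ D` with `∑ λ_i ‖x_i‖ < ∞`,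
then `∑ λ_i x_i` converges to a point of `D`, and for every convex `f : D → ℝ`,
`f(∑ λ_i x_i) ≤ ∑ λ_i f(x_i)`, where the right-hand side either converges or diverges
to `+∞`. -/
theorem stmt_7 (lam : ℕ → ℝ) (hlam : ∀ i, 0 ≤ lam i) (hsum : HasSum lam 1)
    (d : ℕ) (D : Set (EuclideanSpace ℝ (Fin d))) (hD : Convex ℝ D)
    (x : ℕ → EuclideanSpace ℝ (Fin d)) (hx : ∀ i, x i ∈ D)
    (hnorm : Summable (fun i => lam i * ‖x i‖)) :
    Summable (fun i => lam i • x i) ∧ (∑' i, lam i • x i) ∈ D ∧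
      ∀ f : EuclideanSpace ℝ (Fin d) → ℝ, ConvexOn ℝ D f →
        (Summable (fun i => lam i * f (x i)) ∨
          Filter.Tendsto (fun n => ∑ i ∈ Finset.range n, lam i * f (x i))
            Filter.atTop Filter.atTop) ∧
        (Summable (fun i => lam i * f (x i)) →
          f (∑' i, lam i • x i) ≤ ∑' i, lam i * f (x i)) := by
  have hsml : Summable (fun i => lam i • x i) :=
    Summable.of_norm (by simpa [norm_smul, abs_of_nonneg (hlam _)] using hnorm)
  have hp := hsml.hasSum
  refine ⟨hsml, hD.hasSum_mem hlam hsum (fun i _ => hx i) hp, fun f hf => ⟨?_, fun hfx => ?_⟩⟩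
  · obtain ⟨c, C, hcC⟩ := hf.exists_sub_mul_norm_le_of_hasSum hlam hsum (fun i _ => hx i) hp
    refine summable_or_tendsto_atTop_of_le (m := fun i => c * lam i - C * (lam i * ‖x i‖))
      ((hsum.summable.mul_left c).sub (hnorm.mul_left C)) fun i => ?_
    by_cases hi : lam i = 0
    · simp [hi]
    · nlinarith [hcC i hi, hlam i]
  · have hepi := hf.convex_epigraph.hasSum_mem hlam hsum (y := fun i => (x i, f (x i)))
      (fun i _ => ⟨hx i, le_rfl⟩) (hp.prodMk hfx.hasSum)
    exact hepi.2
end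

section
/- Let (λ_n)_{n∈ℕ}, (μ_n)_{n∈ℕ} ∈ Λ, let d ∈ ℕ, let D ⊆ ℝ^d be a nonempty convex set, and let f : D → ℝ be bounded from below. If the inequality f(∑_{i=1}^∞ λ_i x_i) ≤ ∑_{i=1}^∞ μ_i f(x_i) holds for every bounded sequence (x_i)_{i∈ℕ} in D (where the right-hand side is understood as an element of (−∞, ∞]), then f is convex. -/
/-!
Restrict `f` to a segment, `φ s = f ((1 - s) • x + s • y)` with `φ 0 ≤ φ 1`, and look at the
points `s ∈ [0, 1]` where `φ` exceeds its chord by at most `ε`. Testing the hypothesis on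
sequences with two values `a, b` shows that `a + (b - a) λ(S)`, `λ(S) = ∑_{i ∈ S} λ i`, is such a
point whenever `a` and `b` are and `(b - a) μ ≤ (b - a) λ` on `S`. As `λ` is nonincreasing, the
sums `λ(S)` over subsets of a fixed `P` bracket every point of `[0, λ(P)]` with gap at most
`λ 0 < 1`; taking for `P` the set where `(b - a) μ ≤ (b - a) λ` or its complement, iteration makes
these points dense in `[0, 1]`. A greedy choice then writes any `t ∈ (0, 1)` as `∑ λ i * s i` with
all `s i` such points in `(t - δ, t + δ)`, and the hypothesis applied to `(s i)` bounds `φ t` by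
the chord up to `ε` and `O(δ)`.
-/

open Set Filter Topology

lemma tsum_indicator_inter_Iio (S : Set ℕ) (f : ℕ → ℝ) (m : ℕ) :
    ∑' i, (S ∩ Iio m).indicator f i = ∑ i ∈ Finset.range m, S.indicator f i := by
  rw [tsum_eq_sum (s := Finset.range m) fun i hi => by simp_all]
  refine Finset.sum_congr rfl fun i hi => ?_
  rw [inter_comm, ← indicator_indicator, indicator_of_mem (by simpa using hi)]

lemma exists_subsets_tsum_indicator_bracket {w : ℕ → ℝ} {M v : ℝ} (hw : Summable w)
    (hwM : ∀ i, w i ≤ M) (hM : 0 ≤ M) (S : Set ℕ) (hv0 : 0 ≤ v)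
    (hv : v ≤ ∑' i, S.indicator w i) :
    ∃ S₁ ⊆ S, ∃ S₂ ⊆ S, ∑' i, S₁.indicator w i ≤ v ∧ v ≤ ∑' i, S₂.indicator w i ∧
      ∑' i, S₂.indicator w i ≤ ∑' i, S₁.indicator w i + M := by
  classical
  by_cases hall : ∀ n, ∑ i ∈ Finset.range n, S.indicator w i ≤ v
  · have hSv := le_of_tendsto' (hw.indicator S).hasSum.tendsto_sum_nat hall
    exact ⟨S, subset_rfl, S, subset_rfl, hSv, hv, by linarith⟩
  push Not at hall
  obtain ⟨m, hm⟩ : ∃ m, Nat.find hall = m + 1 :=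
    Nat.exists_eq_succ_of_ne_zero fun h0 => by
      have := Nat.find_spec hall
      simp only [h0, Finset.range_zero, Finset.sum_empty] at this
      linarith
  have hle : ∑ i ∈ Finset.range m, S.indicator w i ≤ v :=
    not_lt.1 (Nat.find_min hall (by omega))
  have hlt : v < ∑ i ∈ Finset.range (m + 1), S.indicator w i := hm ▸ Nat.find_spec hall
  have hwm : S.indicator w m ≤ M := by
    by_cases h : m ∈ S <;> simp [h, hwM, hM]
  refine ⟨S ∩ Iio m, inter_subset_left, S ∩ Iio (m + 1), inter_subset_left, ?_, ?_, ?_⟩ <;>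
    simp only [tsum_indicator_inter_Iio, Finset.sum_range_succ] at hlt ⊢ <;> linarith

lemma tsum_indicator_mem_Icc {w : ℕ → ℝ} (hw0 : ∀ i, 0 ≤ w i) (hw : HasSum w 1) (S : Set ℕ) :
    ∑' i, S.indicator w i ∈ Icc 0 1 :=
  ⟨tsum_nonneg fun i => indicator_nonneg (fun i _ => hw0 i) i,
    hw.tsum_eq ▸ (hw.summable.indicator S).tsum_le_tsum
      (indicator_le_self' fun i _ => hw0 i) hw.summable⟩

lemma mul_tsum_indicator_le {u w : ℕ → ℝ} (hu : Summable u) (hw : Summable w) {c : ℝ} {S : Set ℕ}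
    (h : ∀ i ∈ S, c * u i ≤ c * w i) :
    c * ∑' i, S.indicator u i ≤ c * ∑' i, S.indicator w i := by
  rw [← (hu.indicator S).tsum_mul_left, ← (hw.indicator S).tsum_mul_left]
  refine ((hu.indicator S).mul_left c).tsum_le_tsum (fun i => ?_) ((hw.indicator S).mul_left c)
  by_cases hi : i ∈ S <;> simp [hi, h]

lemma summable_mul_of_forall_mem_Icc {w g : ℕ → ℝ} (hw0 : ∀ i, 0 ≤ w i) (hw : Summable w)
    {B C : ℝ} (hg : ∀ i, g i ∈ Icc B C) : Summable (fun i => w i * g i) := by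
  refine Summable.of_norm_bounded (hw.mul_right (|B| + |C|)) fun i => ?_
  rw [norm_mul, Real.norm_of_nonneg (hw0 i)]
  refine mul_le_mul_of_nonneg_left (abs_le.2 ⟨?_, ?_⟩) (hw0 i)
  · linarith [neg_abs_le B, abs_nonneg C, (hg i).1]
  · linarith [le_abs_self C, abs_nonneg B, (hg i).2]

lemma exists_mem_Ioo_sub_mul_mem_Ioo {G : Set ℝ} {α β l T r : ℝ} (hG : Ioo α β ⊆ closure G)
    (hl : 0 < l) (hT : 0 < T) (hr : r ∈ Ioo (α * (l + T)) (β * (l + T))) :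
    ∃ s ∈ G ∩ Ioo α β, r - l * s ∈ Ioo (α * T) (β * T) := by
  have hlT : 0 < l + T := by positivity
  -- `s = r / (l + T)` would do; density gives a point of `G` close enough to it.
  have hu : r / (l + T) ∈ Ioo α β := ⟨(lt_div_iff₀ hlT).2 hr.1, (div_lt_iff₀ hlT).2 hr.2⟩
  have huO : r / (l + T) ∈ Ioo ((r - β * T) / l) ((r - α * T) / l) := by
    constructor <;> rw [div_lt_div_iff₀ (by assumption) (by assumption)]
    · nlinarith [mul_lt_mul_of_pos_right hr.2 hT]
    · nlinarith [mul_lt_mul_of_pos_right hr.1 hT]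
  obtain ⟨s, ⟨⟨hsl, hsu⟩, hsαβ⟩, hsG⟩ :=
    mem_closure_iff.1 (hG hu) _ (isOpen_Ioo.inter isOpen_Ioo) ⟨huO, hu⟩
  rw [div_lt_iff₀ hl] at hsl
  rw [lt_div_iff₀ hl] at hsu
  exact ⟨s, ⟨hsG, hsαβ⟩, by linarith, by linarith⟩

theorem exists_hasSum_mul_mem_of_Ioo_subset_closure {lam : ℕ → ℝ} (hlam_pos : ∀ n, 0 < lam n)
    (hlam : HasSum lam 1) {G : Set ℝ} {α β t : ℝ} (hG : Ioo α β ⊆ closure G)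
    (ht : t ∈ Ioo α β) :
    ∃ s : ℕ → ℝ, (∀ n, s n ∈ G ∩ Ioo α β) ∧ HasSum (fun n => lam n * s n) t := by
  set T : ℕ → ℝ := fun n => 1 - ∑ i ∈ Finset.range n, lam i
  have hT_pos : ∀ n, 0 < T n := fun n => by
    have := sum_le_hasSum (Finset.range (n + 1)) (fun i _ => (hlam_pos i).le) hlam
    rw [Finset.sum_range_succ] at this
    linarith [hlam_pos n]
  have hT_succ : ∀ n, T n = lam n + T (n + 1) := fun n => by
    simp only [T, Finset.sum_range_succ]; ring
  have hT_lim : Tendsto T atTop (𝓝 0) := by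
    simpa using hlam.tendsto_sum_nat.const_sub 1
  -- `T n = ∑_{i ≥ n} lam i`; the remainder `r n = t - ∑_{i < n} lam i * s i` stays in
  -- `(α * T n, β * T n)` and hence tends to `0`.
  choose! next hnext_mem hnext_rem using fun n r (hr : r ∈ Ioo (α * T n) (β * T n)) =>
    exists_mem_Ioo_sub_mul_mem_Ioo hG (hlam_pos n) (hT_pos (n + 1)) (hT_succ n ▸ hr)
  let r : ℕ → ℝ := fun n => Nat.rec t (fun m rm => rm - lam m * next m rm) n
  have hr : ∀ n, r n ∈ Ioo (α * T n) (β * T n) := by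
    intro n
    induction n with
    | zero => simpa [r, T] using ht
    | succ n ih => exact hnext_rem n (r n) ih
  have hpartial : ∀ n, ∑ i ∈ Finset.range n, lam i * next i (r i) = t - r n := by
    intro n
    induction n with
    | zero => simp [r]
    | succ n ih => rw [Finset.sum_range_succ, ih]; simp only [r]; ring
  have hr_lim : Tendsto r atTop (𝓝 0) := by
    refine tendsto_of_tendsto_of_tendsto_of_le_of_le ?_ ?_ (fun n => (hr n).1.le)
      (fun n => (hr n).2.le) <;> simpa using hT_lim.const_mul _
  have hsumm : Summable fun n => lam n * next n (r n) :=
    summable_mul_of_forall_mem_Icc (fun n => (hlam_pos n).le) hlam.summable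
      fun n => Ioo_subset_Icc_self (hnext_mem n _ (hr n)).2
  refine ⟨fun n => next n (r n), fun n => hnext_mem n _ (hr n), hsumm.hasSum_iff_tendsto_nat.2 ?_⟩
  simpa [hpartial] using hr_lim.const_sub t

/-- The hypothesis of the theorem for a function on `[0, 1]`, where every sequence is bounded. -/
def SeriesJensen (lam mu : ℕ → ℝ) (φ : ℝ → ℝ) : Prop :=
  ∀ s : ℕ → ℝ, (∀ i, s i ∈ Icc 0 1) → Summable (fun i => mu i * φ (s i)) →
    φ (∑' i, lam i * s i) ≤ ∑' i, mu i * φ (s i)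

def belowChord (φ : ℝ → ℝ) (ε : ℝ) : Set ℝ :=
  {s | s ∈ Icc 0 1 ∧ φ s ≤ (1 - s) * φ 0 + s * φ 1 + ε}

namespace SeriesJensen

variable {lam mu : ℕ → ℝ} {φ : ℝ → ℝ}

theorem apply_add_mul_tsum_indicator_le (hφ : SeriesJensen lam mu φ) (hlam : HasSum lam 1)
    (hmu : HasSum mu 1) {a b : ℝ} (ha : a ∈ Icc 0 1) (hb : b ∈ Icc 0 1) (S : Set ℕ) :
    φ (a + (b - a) * ∑' i, S.indicator lam i) ≤ φ a + (φ b - φ a) * ∑' i, S.indicator mu i := by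
  classical
  set s : ℕ → ℝ := S.piecewise (fun _ => b) (fun _ => a)
  have hs01 : ∀ i, s i ∈ Icc 0 1 := by
    intro i; by_cases h : i ∈ S <;> simp [s, h, ha, hb]
  have hlam_s : ∀ i, lam i * s i = lam i * a + (b - a) * S.indicator lam i := by
    intro i; by_cases h : i ∈ S <;> simp [s, h]; ring
  have hmu_s : ∀ i, mu i * φ (s i) = mu i * φ a + (φ b - φ a) * S.indicator mu i := by
    intro i; by_cases h : i ∈ S <;> simp [s, h]; ring
  have hsum_lam := (hlam.mul_right a).add ((hlam.summable.indicator S).hasSum.mul_left (b - a))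
  have hsum_mu := (hmu.mul_right (φ a)).add ((hmu.summable.indicator S).hasSum.mul_left (φ b - φ a))
  rw [one_mul, ← funext hlam_s] at hsum_lam
  rw [one_mul, ← funext hmu_s] at hsum_mu
  rw [← hsum_lam.tsum_eq, ← hsum_mu.tsum_eq]
  exact hφ s hs01 hsum_mu.summable

theorem add_mul_tsum_indicator_mem_belowChord (hφ : SeriesJensen lam mu φ)
    (hlam0 : ∀ i, 0 ≤ lam i) (hlam : HasSum lam 1) (hmu0 : ∀ i, 0 ≤ mu i) (hmu : HasSum mu 1)
    (hc : φ 0 ≤ φ 1) {ε a b : ℝ} (ha : a ∈ belowChord φ ε) (hb : b ∈ belowChord φ ε)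
    {S : Set ℕ} (hS : ∀ i ∈ S, (b - a) * mu i ≤ (b - a) * lam i) :
    a + (b - a) * ∑' i, S.indicator lam i ∈ belowChord φ ε := by
  obtain ⟨⟨ha0, ha1⟩, haφ⟩ := ha
  obtain ⟨⟨hb0, hb1⟩, hbφ⟩ := hb
  obtain ⟨hθ0, hθ1⟩ := tsum_indicator_mem_Icc hlam0 hlam S
  obtain ⟨hν0, hν1⟩ := tsum_indicator_mem_Icc hmu0 hmu S
  have hweight := mul_tsum_indicator_le hmu.summable hlam.summable hS
  set θ := ∑' i, S.indicator lam i
  set ν := ∑' i, S.indicator mu i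
  refine ⟨⟨by nlinarith, by nlinarith⟩, ?_⟩
  have hmix := hφ.apply_add_mul_tsum_indicator_le hlam hmu ⟨ha0, ha1⟩ ⟨hb0, hb1⟩ S
  -- The chord is nondecreasing, so passing from `a + (b - a) * ν` to `a + (b - a) * θ` raises it.
  nlinarith [mul_le_mul_of_nonneg_left haφ (sub_nonneg.2 hν1), mul_le_mul_of_nonneg_left hbφ hν0,
    mul_le_mul_of_nonneg_left hweight (sub_nonneg.2 hc)]

theorem exists_belowChord_uIcc_of_le_tsum_indicator (hφ : SeriesJensen lam mu φ)
    (hlam0 : ∀ i, 0 ≤ lam i) (hlam_anti : Antitone lam) (hlam : HasSum lam 1)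
    (hmu0 : ∀ i, 0 ≤ mu i) (hmu : HasSum mu 1) (hc : φ 0 ≤ φ 1) {ε a b : ℝ}
    (ha : a ∈ belowChord φ ε) (hb : b ∈ belowChord φ ε)
    {P : Set ℕ} (hP : ∀ i ∈ P, (b - a) * mu i ≤ (b - a) * lam i)
    {θ : ℝ} (hθ0 : 0 ≤ θ) (hθ : θ ≤ ∑' i, P.indicator lam i) :
    ∃ a' ∈ belowChord φ ε, ∃ b' ∈ belowChord φ ε,
      a + (b - a) * θ ∈ uIcc a' b' ∧ |b' - a'| ≤ lam 0 * |b - a| := by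
  obtain ⟨S₁, hS₁, S₂, hS₂, hθ₁, hθ₂, hgap⟩ := exists_subsets_tsum_indicator_bracket
    hlam.summable (fun i => hlam_anti (Nat.zero_le i)) (hlam0 0) P hθ0 hθ
  have mem : ∀ S ⊆ P, a + (b - a) * ∑' i, S.indicator lam i ∈ belowChord φ ε := fun S hS =>
    hφ.add_mul_tsum_indicator_mem_belowChord hlam0 hlam hmu0 hmu hc ha hb fun i hi => hP i (hS hi)
  refine ⟨_, mem S₁ hS₁, _, mem S₂ hS₂, ?_, ?_⟩
  · rcases le_total a b with hab | hab
    · exact mem_uIcc.2 (Or.inl ⟨by nlinarith, by nlinarith⟩)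
    · exact mem_uIcc.2 (Or.inr ⟨by nlinarith, by nlinarith⟩)
  · rw [show ∀ x y : ℝ, a + (b - a) * x - (a + (b - a) * y) = (b - a) * (x - y) by intros; ring,
      abs_mul, abs_of_nonneg (sub_nonneg.2 (hθ₁.trans hθ₂)), mul_comm]
    exact mul_le_mul_of_nonneg_right (by linarith) (abs_nonneg _)

theorem exists_belowChord_uIcc_refine (hφ : SeriesJensen lam mu φ)
    (hlam0 : ∀ i, 0 ≤ lam i) (hlam_anti : Antitone lam) (hlam : HasSum lam 1)
    (hmu0 : ∀ i, 0 ≤ mu i) (hmu : HasSum mu 1) (hc : φ 0 ≤ φ 1) {ε a b w : ℝ}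
    (ha : a ∈ belowChord φ ε) (hb : b ∈ belowChord φ ε) (hw : w ∈ uIcc a b) :
    ∃ a' ∈ belowChord φ ε, ∃ b' ∈ belowChord φ ε, w ∈ uIcc a' b' ∧ |b' - a'| ≤ lam 0 * |b - a| := by
  rw [← segment_eq_uIcc, segment_eq_image_lineMap] at hw
  obtain ⟨θ, ⟨hθ0, hθ1⟩, rfl⟩ := hw
  rw [AffineMap.lineMap_apply_ring', mul_comm, add_comm]
  set P := {i | (b - a) * mu i ≤ (b - a) * lam i}
  by_cases hθ : θ ≤ ∑' i, P.indicator lam i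
  · exact hφ.exists_belowChord_uIcc_of_le_tsum_indicator hlam0 hlam_anti hlam hmu0 hmu hc ha hb
      (fun i hi => hi) hθ0 hθ
  · -- Off `P` the weight inequality reverses, so we mix from `b` towards `a` instead.
    have hPc : ∀ i ∈ Pᶜ, (a - b) * mu i ≤ (a - b) * lam i := fun i hi => by
      simp only [P, mem_compl_iff, mem_ofPred_eq, not_le] at hi
      linarith
    have hsplit : ∑' i, P.indicator lam i + ∑' i, Pᶜ.indicator lam i = 1 := by
      rw [← (hlam.summable.indicator P).tsum_add (hlam.summable.indicator Pᶜ), ← hlam.tsum_eq]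
      exact tsum_congr (indicator_self_add_compl_apply P lam)
    obtain ⟨a', ha', b', hb', hw', hgap⟩ := hφ.exists_belowChord_uIcc_of_le_tsum_indicator hlam0
      hlam_anti hlam hmu0 hmu hc hb ha hPc (sub_nonneg.2 hθ1) (by linarith)
    refine ⟨a', ha', b', hb', ?_, abs_sub_comm a b ▸ hgap⟩
    convert hw' using 1
    ring

theorem Icc_subset_closure_belowChord (hφ : SeriesJensen lam mu φ)
    (hlam_pos : ∀ i, 0 < lam i) (hlam_anti : Antitone lam) (hlam : HasSum lam 1)
    (hmu0 : ∀ i, 0 ≤ mu i) (hmu : HasSum mu 1) (hc : φ 0 ≤ φ 1) {ε : ℝ} (hε : 0 ≤ ε) :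
    Icc 0 1 ⊆ closure (belowChord φ ε) := by
  have hlam0 : ∀ i, 0 ≤ lam i := fun i => (hlam_pos i).le
  have hbracket : ∀ k : ℕ, ∀ w ∈ Icc (0 : ℝ) 1, ∃ a ∈ belowChord φ ε, ∃ b ∈ belowChord φ ε,
      w ∈ uIcc a b ∧ |b - a| ≤ lam 0 ^ k := by
    intro k
    induction k with
    | zero =>
      intro w hw
      refine ⟨0, ⟨left_mem_Icc.2 zero_le_one, ?_⟩, 1, ⟨right_mem_Icc.2 zero_le_one, ?_⟩,
        by rwa [uIcc_of_le zero_le_one], by simp⟩ <;> simp [hε]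
    | succ k ih =>
      intro w hw
      obtain ⟨a, ha, b, hb, hwab, hab⟩ := ih w hw
      obtain ⟨a', ha', b', hb', hw', hab'⟩ :=
        hφ.exists_belowChord_uIcc_refine hlam0 hlam_anti hlam hmu0 hmu hc ha hb hwab
      exact ⟨a', ha', b', hb', hw', hab'.trans (pow_succ' (lam 0) k ▸
        mul_le_mul_of_nonneg_left hab (hlam0 0))⟩
  have hlam0_lt : lam 0 < 1 := by
    have := sum_le_hasSum (Finset.range 2) (fun i _ => hlam0 i) hlam
    simp only [Finset.sum_range_succ, Finset.sum_range_zero, zero_add] at this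
    linarith [hlam_pos 1]
  intro w hw
  refine Metric.mem_closure_iff.2 fun η hη => ?_
  obtain ⟨k, hk⟩ := exists_pow_lt_of_lt_one hη hlam0_lt
  obtain ⟨a, ha, b, hb, hwab, hab⟩ := hbracket k w hw
  exact ⟨a, ha, (abs_sub_left_of_mem_uIcc hwab).trans_lt (hab.trans_lt hk)⟩

theorem le_chord (hφ : SeriesJensen lam mu φ)
    (hlam_pos : ∀ i, 0 < lam i) (hlam_anti : Antitone lam) (hlam : HasSum lam 1)
    (hmu0 : ∀ i, 0 ≤ mu i) (hmu : HasSum mu 1) {B : ℝ} (hB : ∀ s ∈ Icc 0 1, B ≤ φ s)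
    (hc : φ 0 ≤ φ 1) {t : ℝ} (ht : t ∈ Ioo 0 1) :
    φ t ≤ (1 - t) * φ 0 + t * φ 1 := by
  set ℓ : ℝ → ℝ := fun s => (1 - s) * φ 0 + s * φ 1
  have key : ∀ ε > 0, ∀ δ ∈ Ioo 0 (min t (1 - t)), φ t ≤ ℓ (t + δ) + ε := by
    intro ε hε δ ⟨hδ0, hδ⟩
    have hδt := hδ.trans_le (min_le_left _ _)
    have hδt' := hδ.trans_le (min_le_right _ _)
    have hsub : Ioo (t - δ) (t + δ) ⊆ Icc 0 1 := fun s hs =>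
      ⟨by linarith [hs.1], by linarith [hs.2]⟩
    obtain ⟨s, hs, hsum⟩ := exists_hasSum_mul_mem_of_Ioo_subset_closure hlam_pos hlam
      (hsub.trans (hφ.Icc_subset_closure_belowChord hlam_pos hlam_anti hlam hmu0 hmu hc hε.le))
      (show t ∈ Ioo (t - δ) (t + δ) from ⟨by linarith, by linarith⟩)
    have hs_le : ∀ n, φ (s n) ≤ ℓ (t + δ) + ε := fun n => (hs n).1.2.trans <| by
      nlinarith [mul_nonneg (sub_nonneg.2 (hs n).2.2.le) (sub_nonneg.2 hc)]
    have hsumm := summable_mul_of_forall_mem_Icc hmu0 hmu.summable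
      fun n => ⟨hB _ (hs n).1.1, hs_le n⟩
    calc φ t = φ (∑' n, lam n * s n) := by rw [hsum.tsum_eq]
      _ ≤ ∑' n, mu n * φ (s n) := hφ s (fun n => (hs n).1.1) hsumm
      _ ≤ ∑' n, mu n * (ℓ (t + δ) + ε) := hsumm.tsum_le_tsum
          (fun n => mul_le_mul_of_nonneg_left (hs_le n) (hmu0 n)) (hmu.summable.mul_right _)
      _ = ℓ (t + δ) + ε := by rw [(hmu.mul_right _).tsum_eq, one_mul]
  refine le_of_forall_pos_le_add fun ε hε => ?_
  have hlim : Tendsto (fun δ => ℓ (t + δ) + ε) (𝓝[>] 0) (𝓝 (ℓ t + ε)) :=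
    ((by fun_prop : Continuous fun δ => ℓ (t + δ) + ε).tendsto' 0 _ (by simp)).mono_left
      nhdsWithin_le_nhds
  refine ge_of_tendsto hlim ?_
  filter_upwards [Ioo_mem_nhdsGT (lt_min ht.1 (sub_pos.2 ht.2))] with δ hδ using key ε hε δ hδ

end SeriesJensen

theorem seriesJensen_comp_lineMap {E : Type*} [NormedAddCommGroup E] [NormedSpace ℝ E]
    {lam mu : ℕ → ℝ} (hlam0 : ∀ n, 0 ≤ lam n) (hlam : HasSum lam 1) {D : Set E}
    (hD : Convex ℝ D) {f : E → ℝ}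
    (hineq : ∀ x : ℕ → E, (∀ i, x i ∈ D) → (∃ K, ∀ i, ‖x i‖ ≤ K) →
      Summable (fun i => mu i * f (x i)) → f (∑' i, lam i • x i) ≤ ∑' i, mu i * f (x i))
    {x y : E} (hx : x ∈ D) (hy : y ∈ D) :
    SeriesJensen lam mu (fun s => f (AffineMap.lineMap x y s)) := by
  intro s hs hsumm
  obtain ⟨K, hK⟩ := (isCompact_Icc.image
    (AffineMap.lineMap_continuous (R := ℝ) (p := x) (q := y))).isBounded.exists_norm_le
  have hsum : HasSum (fun i => lam i • AffineMap.lineMap x y (s i))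
      (AffineMap.lineMap x y (∑' i, lam i * s i)) := by
    have h := ((summable_mul_of_forall_mem_Icc hlam0 hlam.summable hs).hasSum.smul_const
      (y - x)).add (hlam.smul_const x)
    rw [one_smul] at h
    simpa [AffineMap.lineMap_apply_module', smul_add, smul_smul] using h
  have := hineq _ (fun i => hD.lineMap_mem hx hy (hs i))
    ⟨K, fun i => hK _ (mem_image_of_mem _ (hs i))⟩ hsumm
  rwa [hsum.tsum_eq] at this

theorem stmt_8_general (lam mu : ℕ → ℝ)
    (hlam_pos : ∀ n, 0 < lam n) (hlam_anti : Antitone lam) (hlam_sum : HasSum lam 1)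
    (hmu_pos : ∀ n, 0 < mu n) (hmu_sum : HasSum mu 1)
    (d : ℕ) (D : Set (EuclideanSpace ℝ (Fin d))) (hD : Convex ℝ D)
    (f : EuclideanSpace ℝ (Fin d) → ℝ) (B : ℝ) (hB : ∀ x ∈ D, B ≤ f x)
    (hineq : ∀ x : ℕ → EuclideanSpace ℝ (Fin d), (∀ i, x i ∈ D) →
      (∃ K, ∀ i, ‖x i‖ ≤ K) →
      Summable (fun i => mu i * f (x i)) →
      f (∑' i, lam i • x i) ≤ ∑' i, mu i * f (x i)) :
    ConvexOn ℝ D f := by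
  have hchord : ∀ x ∈ D, ∀ y ∈ D, f x ≤ f y → ∀ t ∈ Ioo (0 : ℝ) 1,
      f (AffineMap.lineMap x y t) ≤ (1 - t) * f x + t * f y := fun x hx y hy hxy t ht => by
    have hφ := seriesJensen_comp_lineMap (fun n => (hlam_pos n).le) hlam_sum hD hineq hx hy
    simpa using hφ.le_chord hlam_pos hlam_anti hlam_sum (fun n => (hmu_pos n).le) hmu_sum
      (fun s hs => hB _ (hD.lineMap_mem hx hy hs)) (by simpa using hxy) ht
  refine convexOn_iff_forall_pos.2 ⟨hD, fun x hx y hy a b ha hb hab => ?_⟩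
  rcases le_total (f x) (f y) with hxy | hyx
  · have := hchord x hx y hy hxy b ⟨hb, by linarith⟩
    rwa [AffineMap.lineMap_apply_module, ← hab, add_sub_cancel_right] at this
  · have := hchord y hy x hx hyx a ⟨ha, by linarith⟩
    rw [AffineMap.lineMap_apply_module, ← hab, add_sub_cancel_left] at this
    rwa [add_comm, add_comm (b * f y)] at this

/-- Main theorem: let `(λ_n), (μ_n) ∈ Λ`, `D ⊆ ℝ^d` nonempty convex, and `f : D → ℝ`
bounded from below.  If `f(∑ λ_i x_i) ≤ ∑ μ_i f(x_i)` holds for every bounded sequence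
`(x_i)` in `D` (the right-hand side being an element of `(−∞,∞]`, i.e. the inequality is
only a restriction when the series converges), then `f` is convex. -/
theorem stmt_8 (lam mu : ℕ → ℝ)
    (hlam_pos : ∀ n, 0 < lam n) (hlam_anti : Antitone lam) (hlam_sum : HasSum lam 1)
    (hmu_pos : ∀ n, 0 < mu n) (hmu_anti : Antitone mu) (hmu_sum : HasSum mu 1)
    (d : ℕ) (D : Set (EuclideanSpace ℝ (Fin d))) (hne : D.Nonempty) (hD : Convex ℝ D)
    (f : EuclideanSpace ℝ (Fin d) → ℝ) (B : ℝ) (hB : ∀ x ∈ D, B ≤ f x)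
    (hineq : ∀ x : ℕ → EuclideanSpace ℝ (Fin d), (∀ i, x i ∈ D) →
      (∃ K, ∀ i, ‖x i‖ ≤ K) →
      Summable (fun i => mu i * f (x i)) →
      f (∑' i, lam i • x i) ≤ ∑' i, mu i * f (x i)) :
    ConvexOn ℝ D f :=
  stmt_8_general lam mu hlam_pos hlam_anti hlam_sum hmu_pos hmu_sum d D hD f B hB hineq
end

section
/- Let d ∈ ℕ, let D ⊆ ℝ^d be a nonempty convex set, let λ_i > 0, i ∈ ℕ, with ∑_{i=1}^∞ λ_i = 1, and let (x_i)_{i∈ℕ} be a bounded sequence in D. Then the series ∑_{i=1}^∞ λ_i x_i converges absolutely and its sum belongs to D. -/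
/-!
Let `C` be the convex hull of the points `x i` and `s = ∑ λᵢ xᵢ`. Restricting to the affine
span of the `x i` we may assume `C` has nonempty interior. If `s` were not interior to `C`, a
linear functional `f` would separate `s` from the interior of `C`, so `f ≤ f s` on `C`; since
`f s = ∑ λᵢ f (xᵢ)` with all `λᵢ > 0`, this forces `f (xᵢ) = f s` for every `i`, so `C` lies in
a hyperplane and has empty interior. Hence `s ∈ C ⊆ D`.
-/

open Set

variable {ι E : Type*} [NormedAddCommGroup E] [NormedSpace ℝ E]

theorem eq_of_hasSum_mul_of_le_of_le {lam a : ι → ℝ} {u t : ℝ} (hpos : ∀ i, 0 < lam i)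
    (hlam : HasSum lam 1) (ha : HasSum (fun i => lam i * a i) t) (hle : ∀ i, a i ≤ u)
    (hut : u ≤ t) (i : ι) : a i = u := by
  have hgap : HasSum (fun i => lam i * (u - a i)) (u - t) := by
    simpa only [mul_sub, one_mul] using (hlam.mul_right u).sub ha
  have hterm : ∀ j, 0 ≤ lam j * (u - a j) := fun j =>
    mul_nonneg (hpos j).le (sub_nonneg.2 (hle j))
  have hzero : u - t = 0 := le_antisymm (by linarith) (hgap.nonneg hterm)
  rw [hzero, hasSum_zero_iff_of_nonneg hterm] at hgap
  have hi := congrFun hgap i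
  simp only [Pi.zero_apply, mul_eq_zero, (hpos i).ne', false_or, sub_eq_zero] at hi
  exact hi.symm

theorem hasSum_smul_mem_interior_convexHull {lam : ι → ℝ} {x : ι → E} {s : E}
    (hpos : ∀ i, 0 < lam i) (hlam : HasSum lam 1) (hs : HasSum (fun i => lam i • x i) s)
    (hint : (interior (convexHull ℝ (range x))).Nonempty) :
    s ∈ interior (convexHull ℝ (range x)) := by
  set C := convexHull ℝ (range x)
  by_contra hsC
  obtain ⟨f, u, hf_int, hf_s⟩ := geometric_hahn_banach_open (convex_convexHull ℝ _).interior
    isOpen_interior (convex_singleton s) (disjoint_singleton_right.2 hsC)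
  have hf_C : C ⊆ {y | f y ≤ u} := by
    calc C ⊆ closure C := subset_closure
      _ = closure (interior C) :=
        ((convex_convexHull ℝ _).closure_interior_eq_closure_of_nonempty_interior hint).symm
      _ ⊆ {y | f y ≤ u} := closure_minimal (fun y hy => (hf_int y hy).le)
          (isClosed_le f.continuous continuous_const)
  have hfx : ∀ i, f (x i) = u := by
    refine eq_of_hasSum_mul_of_le_of_le hpos hlam ?_ (fun i => hf_C ?_) (hf_s s rfl)
    · simpa only [map_smul, smul_eq_mul] using hs.mapL f
    · exact subset_convexHull ℝ _ (mem_range_self i)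
  have hC_level : C ⊆ {y | f y = u} :=
    convexHull_min (range_subset_iff.2 hfx) (convex_hyperplane f.isLinear u)
  obtain ⟨y, hy⟩ := hint
  exact (hf_int y hy).ne (hC_level (interior_subset hy))

theorem affineSpan_range_codRestrict_span {v : ι → E} (i₀ : ι) (hv : v i₀ = 0) :
    affineSpan ℝ (range fun i => (⟨v i, Submodule.subset_span (mem_range_self i)⟩ :
      Submodule.span ℝ (range v))) = ⊤ := by
  set w : ι → Submodule.span ℝ (range v) :=
    fun i => ⟨v i, Submodule.subset_span (mem_range_self i)⟩
  have hw : range w = Subtype.val ⁻¹' range v := by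
    ext y
    exact ⟨fun ⟨i, hi⟩ => ⟨i, congrArg Subtype.val hi⟩, fun ⟨i, hi⟩ => ⟨i, Subtype.ext hi⟩⟩
  have hne : (range w).Nonempty := ⟨w i₀, mem_range_self i₀⟩
  rw [AffineSubspace.affineSpan_eq_top_iff_vectorSpan_eq_top_of_nonempty ℝ _ _ hne,
    vectorSpan_range_eq_span_range_vsub_right ℝ w i₀]
  have hw₀ : w i₀ = 0 := Subtype.ext hv
  simp only [hw₀, vsub_eq_sub, sub_zero, hw, Submodule.span_span_coe_preimage]

theorem hasSum_smul_mem_convexHull [FiniteDimensional ℝ E] {lam : ι → ℝ} {x : ι → E} {s : E}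
    (hpos : ∀ i, 0 < lam i) (hlam : HasSum lam 1) (hs : HasSum (fun i => lam i • x i) s) :
    s ∈ convexHull ℝ (range x) := by
  obtain ⟨i₀⟩ : Nonempty ι :=
    (isEmpty_or_nonempty ι).resolve_left fun _ => one_ne_zero (hlam.unique hasSum_empty)
  set V := Submodule.span ℝ (range fun i => x i - x i₀)
  let z : ι → V := fun i => ⟨x i - x i₀, Submodule.subset_span (mem_range_self i)⟩
  have hzs : HasSum (fun i => lam i • (x i - x i₀)) (s - x i₀) := by
    simpa only [smul_sub, one_smul] using hs.sub (hlam.smul_const (x i₀))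
  have hz_abs : Summable fun i => ‖lam i • z i‖ :=
    (summable_norm_iff.2 hzs.summable).congr fun _ => rfl
  obtain ⟨t, ht⟩ := hz_abs.of_norm
  have hts : (t : E) = s - x i₀ := (ht.mapL V.subtypeL).unique hzs
  have hint : (interior (convexHull ℝ (range z))).Nonempty := by
    rw [(convex_convexHull ℝ _).interior_nonempty_iff_affineSpan_eq_top, affineSpan_convexHull]
    exact affineSpan_range_codRestrict_span i₀ (sub_self _)
  have htC := interior_subset (hasSum_smul_mem_interior_convexHull hpos hlam ht hint)
  let A : V →ᵃ[ℝ] E := (AffineEquiv.constVAdd ℝ E (x i₀)).toAffineMap.comp V.subtype.toAffineMap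
  have hAz : A ∘ z = x := funext fun i => add_sub_cancel (x i₀) (x i)
  have hAt : A t = s := by
    change x i₀ + (t : E) = s
    rw [hts, add_sub_cancel]
  rw [← hAt, ← hAz, range_comp, ← AffineMap.image_convexHull]
  exact mem_image_of_mem A htC

theorem summable_norm_smul_of_norm_le {lam : ι → ℝ} {x : ι → E} {K : ℝ}
    (hlam : Summable lam) (hnonneg : ∀ i, 0 ≤ lam i) (hK : ∀ i, ‖x i‖ ≤ K) :
    Summable fun i => ‖lam i • x i‖ := by
  refine (hlam.mul_right K).of_nonneg_of_le (fun i => norm_nonneg _) (fun i => ?_)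
  rw [norm_smul, Real.norm_of_nonneg (hnonneg i)]
  exact mul_le_mul_of_nonneg_left (hK i) (hnonneg i)

theorem stmt_9_general (d : ℕ) (D : Set (EuclideanSpace ℝ (Fin d)))
    (hD : Convex ℝ D) (lam : ℕ → ℝ) (hpos : ∀ i, 0 < lam i) (hsum : HasSum lam 1)
    (x : ℕ → EuclideanSpace ℝ (Fin d)) (hx : ∀ i, x i ∈ D)
    (hbdd : ∃ K > (0 : ℝ), ∀ i, ‖x i‖ ≤ K) :
    Summable (fun i => ‖lam i • x i‖) ∧ Summable (fun i => lam i • x i) ∧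
      (∑' i, lam i • x i) ∈ D := by
  obtain ⟨K, -, hK⟩ := hbdd
  have habs := summable_norm_smul_of_norm_le hsum.summable (fun i => (hpos i).le) hK
  have hhull := hasSum_smul_mem_convexHull hpos hsum habs.of_norm.hasSum
  exact ⟨habs, habs.of_norm, convexHull_min (range_subset_iff.2 hx) hD hhull⟩

/-- For positive weights `λ_i` with `∑ λ_i = 1` and a bounded sequence `(x_i)` in a
nonempty convex `D ⊆ ℝ^d`, the series `∑ λ_i x_i` converges absolutely and its sum
belongs to `D`. -/
theorem stmt_9 (d : ℕ) (D : Set (EuclideanSpace ℝ (Fin d))) (hne : D.Nonempty)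
    (hD : Convex ℝ D) (lam : ℕ → ℝ) (hpos : ∀ i, 0 < lam i) (hsum : HasSum lam 1)
    (x : ℕ → EuclideanSpace ℝ (Fin d)) (hx : ∀ i, x i ∈ D)
    (hbdd : ∃ K > (0 : ℝ), ∀ i, ‖x i‖ ≤ K) :
    Summable (fun i => ‖lam i • x i‖) ∧ Summable (fun i => lam i • x i) ∧
      (∑' i, lam i • x i) ∈ D :=
  stmt_9_general d D hD lam hpos hsum x hx hbdd
end

section
/- Let (λ_n)_{n∈ℕ}, (μ_n)_{n∈ℕ} ∈ Λ, let d ∈ ℕ, let D ⊆ ℝ^d be a nonempty convex set, and let f : D → ℝ be bounded from below. If f(∑_{i=1}^∞ λ_i x_i) ≤ ∑_{i=1}^∞ μ_i f(x_i) holds for every bounded sequence (x_i)_{i∈ℕ} in D, then f is (λ_1, μ_1)-convex, i.e., f(λ_1·x + (1−λ_1)·y) ≤ μ_1·f(x) + (1−μ_1)·f(y) for all x, y ∈ D. -/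
/-- Under the hypotheses of the main theorem, `f` is `(λ₁, μ₁)`-convex:
`f(λ₁·x + (1−λ₁)·y) ≤ μ₁·f(x) + (1−μ₁)·f(y)` for all `x, y ∈ D`. -/
theorem stmt_11 (lam mu : ℕ → ℝ)
    (hlam_pos : ∀ n, 0 < lam n) (hlam_anti : Antitone lam) (hlam_sum : HasSum lam 1)
    (hmu_pos : ∀ n, 0 < mu n) (hmu_anti : Antitone mu) (hmu_sum : HasSum mu 1)
    (d : ℕ) (D : Set (EuclideanSpace ℝ (Fin d))) (hne : D.Nonempty) (hD : Convex ℝ D)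
    (f : EuclideanSpace ℝ (Fin d) → ℝ) (B : ℝ) (hB : ∀ x ∈ D, B ≤ f x)
    (hineq : ∀ x : ℕ → EuclideanSpace ℝ (Fin d), (∀ i, x i ∈ D) →
      (∃ K, ∀ i, ‖x i‖ ≤ K) →
      Summable (fun i => mu i * f (x i)) →
      f (∑' i, lam i • x i) ≤ ∑' i, mu i * f (x i)) :
    ∀ x ∈ D, ∀ y ∈ D,
      f (lam 0 • x + (1 - lam 0) • y) ≤ mu 0 * f x + (1 - mu 0) * f y := by
  intro a ha b hb
  set x : ℕ → EuclideanSpace ℝ (Fin d) := fun i => if i = 0 then a else b with hx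
  have hmem : ∀ i, x i ∈ D := by
    intro i; simp only [hx]; split <;> assumption
  have hbd : ∃ K, ∀ i, ‖x i‖ ≤ K := by
    refine ⟨max ‖a‖ ‖b‖, fun i => ?_⟩
    simp only [hx]; split
    · exact le_max_left _ _
    · exact le_max_right _ _
  have h1 : HasSum (fun i => lam i • x i) (lam 0 • a + (1 - lam 0) • b) := by
    have hb' : HasSum (fun i => lam i • b) ((1:ℝ) • b) := hlam_sum.smul_const b
    have hδ : HasSum (fun i : ℕ => if i = 0 then lam 0 • (a - b) else 0)
        (lam 0 • (a - b)) := hasSum_ite_eq 0 _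
    have h := hb'.add hδ
    convert h using 1
    · funext i
      simp only [hx]
      split
      · rename_i h0; subst h0; rw [smul_sub]; abel
      · simp
    · simp [smul_sub, sub_smul, one_smul]; abel
  have h2 : HasSum (fun i => mu i * f (x i)) (mu 0 * f a + (1 - mu 0) * f b) := by
    have hb' : HasSum (fun i => mu i * f b) (1 * f b) := hmu_sum.mul_right (f b)
    have hδ : HasSum (fun i : ℕ => if i = 0 then mu 0 * (f a - f b) else 0)
        (mu 0 * (f a - f b)) := hasSum_ite_eq 0 _
    have h := hb'.add hδ
    convert h using 1
    · funext i
      simp only [hx]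
      split
      · rename_i h0; subst h0; ring
      · simp
    · ring
  have key := hineq x hmem hbd h2.summable
  rwa [h1.tsum_eq, h2.tsum_eq] at key
end

section
/- Let (λ_n)_{n∈ℕ}, (μ_n)_{n∈ℕ} ∈ Λ, let d ∈ ℕ, let D ⊆ ℝ^d be a nonempty convex set, and let f : D → ℝ be bounded from below. If f(∑_{i=1}^∞ λ_i x_i) ≤ ∑_{i=1}^∞ μ_i f(x_i) holds for every bounded sequence (x_i)_{i∈ℕ} in D, then for all x, y ∈ D and all t ∈ [0,1], f(t·x + (1−t)·y) ≤ max(f(x), 0) + max(f(y), 0); in particular, f is bounded from above on every segment [x, y] = {r·x + (1−r)·y : r ∈ [0,1]} with x, y ∈ D. -/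
open Filter Set

/-- tail sums of a sequence -/
noncomputable def tailSum (lam : ℕ → ℝ) (n : ℕ) : ℝ := ∑' i, lam (i + n)

section TailFacts

variable {lam : ℕ → ℝ}

lemma tailSum_summable (hlam_sum : HasSum lam 1) (n : ℕ) : Summable (fun i => lam (i + n)) := by
  have := hlam_sum.summable
  exact (summable_nat_add_iff n).2 this

lemma tailSum_zero (hlam_sum : HasSum lam 1) : tailSum lam 0 = 1 := by
  have : (fun i => lam (i + 0)) = lam := by funext i; simp
  rw [tailSum, this, hlam_sum.tsum_eq]

lemma tailSum_succ (hlam_sum : HasSum lam 1) (n : ℕ) : tailSum lam n = lam n + tailSum lam (n + 1) := by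
  have h := Summable.tsum_eq_zero_add (tailSum_summable hlam_sum n)
  rw [tailSum, h]
  congr 1
  · simp
  · rw [tailSum]
    congr 1
    funext i
    congr 1
    omega

lemma tailSum_pos (hlam_pos : ∀ n, 0 < lam n) (hlam_sum : HasSum lam 1) (n : ℕ) : 0 < tailSum lam n := by
  have h1 : lam (0 + n) ≤ tailSum lam n :=
    Summable.le_tsum (tailSum_summable hlam_sum n) 0 (fun j _ => (hlam_pos _).le)
  have := hlam_pos (0 + n)
  linarith

lemma tailSum_tendsto (hlam_sum : HasSum lam 1) : Tendsto (tailSum lam) atTop (nhds 0) := by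
  exact tendsto_sum_nat_add lam

lemma lam_zero_lt_one (hlam_pos : ∀ n, 0 < lam n) (hlam_sum : HasSum lam 1) : lam 0 < 1 := by
  have h : ∑ i ∈ Finset.range 2, lam i ≤ ∑' i, lam i :=
    Summable.sum_le_tsum _ (fun i _ => (hlam_pos i).le) hlam_sum.summable
  rw [hlam_sum.tsum_eq] at h
  simp [Finset.sum_range_succ] at h
  linarith [hlam_pos 1]

end TailFacts

section Recursion

/-- Given a set `G ⊆ [0,1]` that is dense in `[0,1]` (in the open-interval sense),
any `t ∈ (0,1)` can be represented as `∑ lam i * u i` with `u i ∈ G`. -/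
lemma exists_hasSum_of_dense {lam : ℕ → ℝ} (hlam_pos : ∀ n, 0 < lam n)
    (hlam_sum : HasSum lam 1) (G : Set ℝ) (hGsub : G ⊆ Set.Icc (0:ℝ) 1)
    (hdense : ∀ lo hi : ℝ, lo < hi → lo < 1 → 0 < hi → ∃ u, u ∈ G ∧ lo < u ∧ u < hi)
    (t : ℝ) (ht0 : 0 < t) (ht1 : t < 1) :
    ∃ u : ℕ → ℝ, (∀ i, u i ∈ G) ∧ HasSum (fun i => lam i * u i) t := by
  have hT := tailSum_pos hlam_pos hlam_sum
  have hTr := tailSum_succ (lam := lam) hlam_sum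
  have hex : ∀ (n : ℕ) (cn : ℝ), 0 < cn → cn < 1 →
      ∃ u, u ∈ G ∧ lam n * u < tailSum lam n * cn ∧
        tailSum lam n * cn - tailSum lam (n+1) < lam n * u := by
    intro n cn h0 h1
    have hl := hlam_pos n
    have hTn := hT n
    have hTn' := hT (n+1)
    have hrec := hTr n
    have hside1 : (tailSum lam n * cn - tailSum lam (n+1)) / lam n
        < tailSum lam n * cn / lam n := by
      rw [div_lt_div_iff₀ hl hl]; nlinarith
    have hside2 : (tailSum lam n * cn - tailSum lam (n+1)) / lam n < 1 := by
      rw [div_lt_one hl]; nlinarith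
    have hside3 : 0 < tailSum lam n * cn / lam n := div_pos (mul_pos hTn h0) hl
    obtain ⟨u, hu, hlo, hhi⟩ := hdense ((tailSum lam n * cn - tailSum lam (n+1)) / lam n)
      (tailSum lam n * cn / lam n) hside1 hside2 hside3
    refine ⟨u, hu, ?_, ?_⟩
    · have := (lt_div_iff₀ hl).1 hhi
      linarith [mul_comm u (lam n)]
    · have := (div_lt_iff₀ hl).1 hlo
      linarith [mul_comm u (lam n)]
  choose! F hF using hex
  set c : ℕ → ℝ := fun n =>
    Nat.rec t (fun n cn => (tailSum lam n * cn - lam n * F n cn) / tailSum lam (n+1)) n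
    with hc_def
  have hc0 : c 0 = t := rfl
  have hcs : ∀ n, c (n+1) = (tailSum lam n * c n - lam n * F n (c n)) / tailSum lam (n+1) :=
    fun n => rfl
  have hc : ∀ n, 0 < c n ∧ c n < 1 := by
    intro n
    induction n with
    | zero => exact ⟨ht0, ht1⟩
    | succ n ih =>
      obtain ⟨h0, h1⟩ := ih
      obtain ⟨_, hlt, hgt⟩ := hF n (c n) h0 h1
      rw [hcs n]
      constructor
      · exact div_pos (by linarith) (hT (n+1))
      · rw [div_lt_one (hT (n+1))]
        linarith
  set u : ℕ → ℝ := fun n => F n (c n) with hu_def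
  have huG : ∀ n, u n ∈ G := fun n => (hF n (c n) (hc n).1 (hc n).2).1
  have hPS : ∀ n, ∑ i ∈ Finset.range n, lam i * u i = t - tailSum lam n * c n := by
    intro n
    induction n with
    | zero => simp [tailSum_zero hlam_sum, hc0]
    | succ n ih =>
      rw [Finset.sum_range_succ, ih, hcs n]
      rw [mul_div_cancel₀ _ (hT (n+1)).ne']
      ring
  have hsm : Summable (fun i => lam i * u i) :=
    Summable.of_nonneg_of_le
      (fun i => mul_nonneg (hlam_pos i).le (hGsub (huG i)).1)
      (fun i => mul_le_of_le_one_right (hlam_pos i).le (hGsub (huG i)).2)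
      hlam_sum.summable
  have htendA := hsm.hasSum.tendsto_sum_nat
  have hzero : Tendsto (fun n => tailSum lam n * c n) atTop (nhds 0) :=
    squeeze_zero (fun n => mul_nonneg (hT n).le (hc n).1.le)
      (fun n => mul_le_of_le_one_right (hT n).le (hc n).2.le)
      (tailSum_tendsto hlam_sum)
  have htendB : Tendsto (fun n => ∑ i ∈ Finset.range n, lam i * u i) atTop (nhds t) := by
    have heq : (fun n => ∑ i ∈ Finset.range n, lam i * u i)
        = fun n => t - tailSum lam n * c n := funext hPS
    rw [heq]
    simpa using tendsto_const_nhds.sub hzero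
  have hts : ∑' i, lam i * u i = t := tendsto_nhds_unique htendA htendB
  exact ⟨u, huG, hts ▸ hsm.hasSum⟩

end Recursion


section Good

variable {E : Type*} [NormedAddCommGroup E] [NormedSpace ℝ E]

/-- The set of parameters for which the claimed bound holds. -/
def goodSet (f : E → ℝ) (x y : E) : Set ℝ :=
  {r | r ∈ Set.Icc (0:ℝ) 1 ∧ f (r • x + (1 - r) • y) ≤ max (f x) 0 + max (f y) 0}

lemma goodSet_subset (f : E → ℝ) (x y : E) : goodSet f x y ⊆ Set.Icc (0:ℝ) 1 :=
  fun _ h => h.1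

lemma goodSet_zero (f : E → ℝ) (x y : E) : (0:ℝ) ∈ goodSet f x y := by
  constructor
  · exact ⟨le_refl _, zero_le_one⟩
  · simp only [zero_smul, sub_zero, one_smul, zero_add]
    have h1 : f y ≤ max (f y) 0 := le_max_left _ _
    have h2 : (0:ℝ) ≤ max (f x) 0 := le_max_right _ _
    linarith

lemma goodSet_one (f : E → ℝ) (x y : E) : (1:ℝ) ∈ goodSet f x y := by
  constructor
  · exact ⟨zero_le_one, le_refl _⟩
  · simp only [one_smul, sub_self, zero_smul, add_zero]
    have h1 : f x ≤ max (f x) 0 := le_max_left _ _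
    have h2 : (0:ℝ) ≤ max (f y) 0 := le_max_right _ _
    linarith

lemma goodSet_mix (lam mu : ℕ → ℝ)
    (hlam_pos : ∀ n, 0 < lam n) (hlam_sum : HasSum lam 1)
    (hmu_pos : ∀ n, 0 < mu n) (hmu_sum : HasSum mu 1)
    (D : Set E) (hD : Convex ℝ D)
    (f : E → ℝ) (B : ℝ) (hB : ∀ x ∈ D, B ≤ f x)
    (hineq : ∀ x : ℕ → E, (∀ i, x i ∈ D) →
      (∃ K, ∀ i, ‖x i‖ ≤ K) →
      Summable (fun i => mu i * f (x i)) →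
      f (∑' i, lam i • x i) ≤ ∑' i, mu i * f (x i))
    (x : E) (hx : x ∈ D) (y : E) (hy : y ∈ D)
    (u : ℕ → ℝ) (hu : ∀ i, u i ∈ goodSet f x y)
    (s : ℝ) (hs : HasSum (fun i => lam i * u i) s) :
    s ∈ goodSet f x y := by
  set C := max (f x) 0 + max (f y) 0 with hC
  set w : ℕ → E := fun i => u i • x + (1 - u i) • y with hw
  have hu0 : ∀ i, 0 ≤ u i := fun i => (hu i).1.1
  have hu1 : ∀ i, u i ≤ 1 := fun i => (hu i).1.2
  have hwD : ∀ i, w i ∈ D := fun i =>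
    hD hx hy (hu0 i) (by linarith [hu1 i]) (by ring)
  have hwB : ∀ i, B ≤ f (w i) := fun i => hB _ (hwD i)
  have hwC : ∀ i, f (w i) ≤ C := fun i => (hu i).2
  have hK : ∃ K, ∀ i, ‖w i‖ ≤ K := by
    refine ⟨‖x‖ + ‖y‖, fun i => ?_⟩
    have h1 : ‖w i‖ ≤ ‖u i • x‖ + ‖(1 - u i) • y‖ := norm_add_le _ _
    rw [norm_smul, norm_smul, Real.norm_eq_abs, Real.norm_eq_abs] at h1
    have h2 : |u i| ≤ 1 := abs_le.2 ⟨by linarith [hu0 i], hu1 i⟩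
    have h3 : |1 - u i| ≤ 1 := abs_le.2 ⟨by linarith [hu1 i], by linarith [hu0 i]⟩
    have h4 : |u i| * ‖x‖ ≤ 1 * ‖x‖ :=
      mul_le_mul_of_nonneg_right h2 (norm_nonneg _)
    have h5 : |1 - u i| * ‖y‖ ≤ 1 * ‖y‖ :=
      mul_le_mul_of_nonneg_right h3 (norm_nonneg _)
    linarith
  have habs : ∀ i, |mu i * f (w i)| ≤ mu i * max |B| |C| := by
    intro i
    rw [abs_mul, abs_of_pos (hmu_pos i)]
    refine mul_le_mul_of_nonneg_left ?_ (hmu_pos i).le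
    rw [abs_le]
    constructor
    · have := neg_abs_le B
      have := le_max_left |B| |C|
      linarith [hwB i]
    · have := le_abs_self C
      have := le_max_right |B| |C|
      linarith [hwC i]
  have hsummu : Summable (fun i => mu i * f (w i)) := by
    refine Summable.of_abs ?_
    exact Summable.of_nonneg_of_le (fun i => abs_nonneg _) habs
      (hmu_sum.summable.mul_right _)
  have hs0 : 0 ≤ s :=
    hasSum_le (fun i => mul_nonneg (hlam_pos i).le (hu0 i)) hasSum_zero hs
  have hs1 : s ≤ 1 :=
    hasSum_le (fun i => mul_le_of_le_one_right (hlam_pos i).le (hu1 i)) hs hlam_sum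
  have hpt : HasSum (fun i => lam i • w i) (s • x + (1 - s) • y) := by
    have h1 : HasSum (fun i => (lam i * u i) • x) (s • x) := hs.smul_const x
    have h2 : HasSum (fun i => (lam i - lam i * u i) • y) ((1 - s) • y) :=
      (hlam_sum.sub hs).smul_const y
    have h3 := h1.add h2
    have heq : (fun i => (lam i * u i) • x + (lam i - lam i * u i) • y)
        = fun i => lam i • w i := by
      funext i
      rw [hw]
      simp only []
      rw [smul_add, smul_smul, smul_smul]
      congr 2
      ring
    rwa [heq] at h3
  have htsum_pt : ∑' i, lam i • w i = s • x + (1 - s) • y := hpt.tsum_eq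
  have hrhs : ∑' i, mu i * f (w i) ≤ C := by
    have h1 : ∑' i, mu i * f (w i) ≤ ∑' i, mu i * C :=
      Summable.tsum_le_tsum (fun i => mul_le_mul_of_nonneg_left (hwC i) (hmu_pos i).le)
        hsummu (hmu_sum.summable.mul_right C)
    have h2 : ∑' i, mu i * C = 1 * C := (hmu_sum.mul_right C).tsum_eq
    linarith
  refine ⟨⟨hs0, hs1⟩, ?_⟩
  have := hineq w hwD hK hsummu
  rw [htsum_pt] at this
  exact this.trans hrhs

end Good


section Net

lemma net_of_two {lam : ℕ → ℝ} (hlam_pos : ∀ n, 0 < lam n) (hlam_sum : HasSum lam 1)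
    (G : Set ℝ) (h0 : (0:ℝ) ∈ G) (h1 : (1:ℝ) ∈ G)
    (htwo : ∀ a ∈ G, ∀ b ∈ G, a + lam 0 * (b - a) ∈ G) :
    ∀ (n : ℕ) (t : ℝ), 0 ≤ t → t ≤ 1 → ∃ a b : ℝ, a ∈ G ∧ b ∈ G ∧ a ≤ t ∧ t ≤ b ∧
      b - a ≤ (max (lam 0) (1 - lam 0))^n := by
  set γ := max (lam 0) (1 - lam 0) with hγ
  have hl0 := hlam_pos 0
  have hl1 := lam_zero_lt_one hlam_pos hlam_sum
  have hγ1 : lam 0 ≤ γ := le_max_left _ _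
  have hγ2 : 1 - lam 0 ≤ γ := le_max_right _ _
  have hγ0 : 0 ≤ γ := hl0.le.trans hγ1
  intro n
  induction n with
  | zero =>
    intro t ht0 ht1
    exact ⟨0, 1, h0, h1, ht0, ht1, by simp⟩
  | succ n ih =>
    intro t ht0 ht1
    obtain ⟨a, b, ha, hb, hat, htb, hw⟩ := ih t ht0 ht1
    have hL : 0 ≤ b - a := by linarith
    have hγn : 0 ≤ γ^n := pow_nonneg hγ0 n
    have hpow : γ^(n+1) = γ * γ^n := by ring
    have hprod : γ * (b - a) ≤ γ * γ^n := mul_le_mul_of_nonneg_left hw hγ0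
    have hp1 := htwo a ha b hb
    have hp2 := htwo b hb a ha
    set p1 := a + lam 0 * (b - a) with hp1d
    set p2 := b + lam 0 * (a - b) with hp2d
    have hb1 : p1 - a ≤ γ * (b - a) := by
      have := mul_le_mul_of_nonneg_right hγ1 hL
      simp only [hp1d]; linarith
    have hb2 : b - p2 ≤ γ * (b - a) := by
      have := mul_le_mul_of_nonneg_right hγ1 hL
      simp only [hp2d]; nlinarith
    have hb3 : p2 - p1 ≤ γ * (b - a) := by
      have h := mul_le_mul_of_nonneg_right hγ2 hL
      have h2 : 0 ≤ lam 0 * (b - a) := mul_nonneg hl0.le hL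
      simp only [hp1d, hp2d]; nlinarith
    rcases le_total t p1 with hc1 | hc1
    · exact ⟨a, p1, ha, hp1, hat, hc1, by linarith⟩
    · rcases le_total t p2 with hc2 | hc2
      · exact ⟨p1, p2, hp1, hp2, hc1, hc2, by linarith⟩
      · exact ⟨p2, b, hp2, hb, hc2, htb, by linarith⟩

lemma dense_of_two {lam : ℕ → ℝ} (hlam_pos : ∀ n, 0 < lam n) (hlam_sum : HasSum lam 1)
    (G : Set ℝ) (h0 : (0:ℝ) ∈ G) (h1 : (1:ℝ) ∈ G)
    (htwo : ∀ a ∈ G, ∀ b ∈ G, a + lam 0 * (b - a) ∈ G) :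
    ∀ lo hi : ℝ, lo < hi → lo < 1 → 0 < hi → ∃ u, u ∈ G ∧ lo < u ∧ u < hi := by
  intro lo hi hlohi hlo1 hhi0
  set γ := max (lam 0) (1 - lam 0) with hγ
  have hl0 := hlam_pos 0
  have hl1 := lam_zero_lt_one hlam_pos hlam_sum
  have hγ0 : 0 ≤ γ := hl0.le.trans (le_max_left _ _)
  have hγlt : γ < 1 := max_lt hl1 (by linarith)
  set p := max lo 0 with hp
  set q := min hi 1 with hq
  have hpq : p < q := max_lt (lt_min hlohi hlo1) (lt_min hhi0 one_pos)
  have hp0 : 0 ≤ p := le_max_right _ _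
  have hq1 : q ≤ 1 := min_le_right _ _
  have hplo : lo ≤ p := le_max_left _ _
  have hqhi : q ≤ hi := min_le_left _ _
  have hev : ∀ᶠ n in atTop, γ^n < (q - p)/2 :=
    (tendsto_pow_atTop_nhds_zero_of_lt_one hγ0 hγlt).eventually
      (gt_mem_nhds (by linarith))
  obtain ⟨n, hn⟩ := hev.exists
  set mid := (p + q)/2 with hmid
  obtain ⟨a, b, ha, hb, ham, hmb, hw⟩ :=
    net_of_two hlam_pos hlam_sum G h0 h1 htwo n mid (by linarith) (by linarith)
  refine ⟨a, ha, ?_, ?_⟩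
  · -- lo ≤ p < a  since a ≥ b - γ^n ≥ mid - γ^n > mid - (q-p)/2 = p
    have : a ≥ mid - γ^n := by linarith
    have : mid - γ^n > p := by
      simp only [hmid] at *
      linarith
    linarith
  · -- a ≤ mid < q ≤ hi
    have : mid < q := by simp only [hmid]; linarith
    linarith

end Net

/-- Under the hypotheses of the main theorem, for all `x, y ∈ D` and `t ∈ [0,1]`,
`f(t·x + (1−t)·y) ≤ (f x)₊ + (f y)₊`; in particular `f` is bounded above on every
segment `[x,y]` with `x, y ∈ D`. -/
theorem stmt_12 (lam mu : ℕ → ℝ)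
    (hlam_pos : ∀ n, 0 < lam n) (hlam_anti : Antitone lam) (hlam_sum : HasSum lam 1)
    (hmu_pos : ∀ n, 0 < mu n) (hmu_anti : Antitone mu) (hmu_sum : HasSum mu 1)
    (d : ℕ) (D : Set (EuclideanSpace ℝ (Fin d))) (hne : D.Nonempty) (hD : Convex ℝ D)
    (f : EuclideanSpace ℝ (Fin d) → ℝ) (B : ℝ) (hB : ∀ x ∈ D, B ≤ f x)
    (hineq : ∀ x : ℕ → EuclideanSpace ℝ (Fin d), (∀ i, x i ∈ D) →
      (∃ K, ∀ i, ‖x i‖ ≤ K) →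
      Summable (fun i => mu i * f (x i)) →
      f (∑' i, lam i • x i) ≤ ∑' i, mu i * f (x i)) :
    (∀ x ∈ D, ∀ y ∈ D, ∀ t ∈ Set.Icc (0 : ℝ) 1,
      f (t • x + (1 - t) • y) ≤ max (f x) 0 + max (f y) 0) ∧
    (∀ x ∈ D, ∀ y ∈ D, ∃ M : ℝ, ∀ z ∈ segment ℝ x y, f z ≤ M) := by
  have key : ∀ x ∈ D, ∀ y ∈ D, ∀ t ∈ Set.Icc (0:ℝ) 1,
      f (t • x + (1 - t) • y) ≤ max (f x) 0 + max (f y) 0 := by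
    intro x hx y hy t ht
    obtain ⟨ht0, ht1⟩ := ht
    suffices h : t ∈ goodSet f x y from h.2
    have htwo : ∀ a ∈ goodSet f x y, ∀ b ∈ goodSet f x y,
        a + lam 0 * (b - a) ∈ goodSet f x y := by
      intro a ha b hb
      have hhs : HasSum (fun i => lam i * (if i = 0 then b else a))
          (a + lam 0 * (b - a)) := by
        have h1 : HasSum (fun i => lam i * a + (if i = 0 then lam 0 * (b - a) else 0))
            (1 * a + lam 0 * (b - a)) := (hlam_sum.mul_right a).add (hasSum_ite_eq 0 _)
        have heq : (fun i => lam i * (if i = 0 then b else a))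
            = fun i => lam i * a + (if i = 0 then lam 0 * (b - a) else 0) := by
          funext i
          by_cases h : i = 0
          · simp [h]; ring
          · simp [h]
        rw [heq]
        simpa using h1
      exact goodSet_mix lam mu hlam_pos hlam_sum hmu_pos hmu_sum D hD f B hB hineq
        x hx y hy (fun i => if i = 0 then b else a)
        (fun i => by by_cases h : i = 0 <;> simp [h, ha, hb]) _ hhs
    rcases eq_or_lt_of_le ht0 with he | ht0'
    · rw [← he]; exact goodSet_zero f x y
    rcases eq_or_lt_of_le ht1 with he | ht1'
    · rw [he]; exact goodSet_one f x y
    obtain ⟨u, huG, hsum⟩ := exists_hasSum_of_dense hlam_pos hlam_sum (goodSet f x y)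
      (goodSet_subset f x y)
      (dense_of_two hlam_pos hlam_sum _ (goodSet_zero f x y) (goodSet_one f x y) htwo)
      t ht0' ht1'
    exact goodSet_mix lam mu hlam_pos hlam_sum hmu_pos hmu_sum D hD f B hB hineq
      x hx y hy u huG t hsum
  refine ⟨key, ?_⟩
  intro x hx y hy
  refine ⟨max (f x) 0 + max (f y) 0, ?_⟩
  intro z hz
  obtain ⟨a, b, ha, hb, hab, rfl⟩ := hz
  have hb' : b = 1 - a := by linarith
  rw [hb']
  exact key x hx y hy a ⟨ha, by linarith⟩
end

section
/- Let (λ_n)_{n∈ℕ} ∈ Λ. Then for every t ∈ [0,1] there exist rational numbers q_i ∈ ℚ ∩ [0,1], i ∈ ℕ, such that t = ∑_{i=1}^∞ λ_i q_i; consequently, 1 − t = ∑_{i=1}^∞ λ_i (1 − q_i). -/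
/-!
Greedy expansion: keep a remainder `r_n ∈ [0, T_n]`, where `T_n = ∑_{k ≥ n} λ_k`. Since
`T_n = λ_n + T_{n+1}` and `T_{n+1} > 0`, the admissible coefficients `q` with
`r_n - λ_n q ∈ [0, T_{n+1}]` form an interval of positive length `T_{n+1} / λ_n` meeting `[0, 1]`,
so a rational one can be chosen. The remainders are squeezed to `0` by the tails `T_n`.
-/

open Set Filter Topology

theorem exists_rat_mem_Icc_inter_Icc_zero_one {a b : ℝ} (hab : a < b) (ha : a ≤ 1) (hb : 0 ≤ b) :
    ∃ q : ℚ, (q : ℝ) ∈ Icc a b ∩ Icc 0 1 := by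
  rcases ha.eq_or_lt with rfl | ha
  · exact ⟨1, by simp [hab.le]⟩
  rcases hb.eq_or_lt with rfl | hb
  · exact ⟨0, by simp [hab.le]⟩
  obtain ⟨q, hq_lo, hq_hi⟩ := exists_rat_btwn (lt_min (max_lt hab hb) (max_lt ha one_pos))
  exact ⟨q, ⟨(le_max_left _ _).trans hq_lo.le, hq_hi.le.trans (min_le_left _ _)⟩,
    (le_max_right _ _).trans hq_lo.le, hq_hi.le.trans (min_le_right _ _)⟩

theorem exists_rat_mem_Icc_zero_one_sub_mul_mem_Icc {l T r : ℝ} (hl : 0 < l) (hT : 0 < T)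
    (hr : r ∈ Icc 0 (l + T)) : ∃ q : ℚ, (q : ℝ) ∈ Icc 0 1 ∧ r - l * q ∈ Icc 0 T := by
  have hab : (r - T) / l < r / l := div_lt_div_of_pos_right (by linarith) hl
  have ha : (r - T) / l ≤ 1 := (div_le_one hl).2 (by linarith [hr.2])
  obtain ⟨q, ⟨hq_lo, hq_hi⟩, hq⟩ :=
    exists_rat_mem_Icc_inter_Icc_zero_one hab ha (div_nonneg hr.1 hl.le)
  refine ⟨q, hq, ?_, ?_⟩
  · linarith [(le_div_iff₀ hl).1 hq_hi]
  · linarith [(div_le_iff₀ hl).1 hq_lo]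

theorem exists_rat_unitInterval_hasSum_mul {lam : ℕ → ℝ} (hpos : ∀ n, 0 < lam n)
    (hsum : Summable lam) {t : ℝ} (ht : t ∈ Icc 0 (∑' n, lam n)) :
    ∃ q : ℕ → ℚ, (∀ i, (q i : ℝ) ∈ Icc 0 1) ∧ HasSum (fun i => lam i * q i) t := by
  set T : ℕ → ℝ := fun n => ∑' k, lam (k + n) with hT
  have hT_succ (n : ℕ) : T n = lam n + T (n + 1) := by
    simpa [hT, add_assoc, add_comm 1] using ((summable_nat_add_iff n).2 hsum).tsum_eq_zero_add
  have hT_pos (n : ℕ) : 0 < T n :=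
    ((summable_nat_add_iff n).2 hsum).tsum_pos (fun k => (hpos _).le) 0 (hpos _)
  choose g hg_unit hg_rem using fun n (r : Icc 0 (T n)) =>
    exists_rat_mem_Icc_zero_one_sub_mul_mem_Icc (hpos n) (hT_pos (n + 1)) (r := r)
      (hT_succ n ▸ r.2)
  let R (n : ℕ) : Icc 0 (T n) := Nat.rec (motive := fun n => Icc 0 (T n))
    ⟨t, by simpa [hT] using ht⟩ (fun n r => ⟨(r : ℝ) - lam n * g n r, hg_rem n r⟩) n
  refine ⟨fun n => g n (R n), fun n => hg_unit n _, ?_⟩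
  have h_partial (n : ℕ) : ∑ i ∈ Finset.range n, lam i * g i (R i) = t - (R n).1 := by
    induction n with
    | zero => simp [R]
    | succ n ih =>
      rw [Finset.sum_range_succ, ih]
      change _ = t - ((R n).1 - lam n * g n (R n))
      ring
  have hR : Tendsto (fun n => (R n).1) atTop (𝓝 0) :=
    squeeze_zero (fun n => (R n).2.1) (fun n => (R n).2.2) (tendsto_sum_nat_add lam)
  rw [hasSum_iff_tendsto_nat_of_nonneg fun i => mul_nonneg (hpos i).le (hg_unit i _).1]
  simpa [h_partial] using hR.const_sub t

theorem stmt_14_general (lam : ℕ → ℝ) (hpos : ∀ n, 0 < lam n)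
    (hsum : HasSum lam 1) :
    ∀ t ∈ Set.Icc (0 : ℝ) 1, ∃ q : ℕ → ℚ,
      (∀ i, (q i : ℝ) ∈ Set.Icc (0 : ℝ) 1) ∧
      HasSum (fun i => lam i * (q i : ℝ)) t ∧
      HasSum (fun i => lam i * (1 - (q i : ℝ))) (1 - t) := by
  intro t ht
  obtain ⟨q, hq_unit, hq_sum⟩ :=
    exists_rat_unitInterval_hasSum_mul hpos hsum.summable (t := t) (by rwa [hsum.tsum_eq])
  refine ⟨q, hq_unit, hq_sum, ?_⟩
  simpa only [mul_sub, mul_one] using hsum.sub hq_sum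

/-- Daróczy–Páles lemma: for `(λ_n) ∈ Λ` and any `t ∈ [0,1]`, there exist rationals
`q_i ∈ ℚ ∩ [0,1]` with `t = ∑ λ_i q_i`; consequently `1 − t = ∑ λ_i (1 − q_i)`. -/
theorem stmt_14 (lam : ℕ → ℝ) (hpos : ∀ n, 0 < lam n) (hanti : Antitone lam)
    (hsum : HasSum lam 1) :
    ∀ t ∈ Set.Icc (0 : ℝ) 1, ∃ q : ℕ → ℚ,
      (∀ i, (q i : ℝ) ∈ Set.Icc (0 : ℝ) 1) ∧
      HasSum (fun i => lam i * (q i : ℝ)) t ∧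
      HasSum (fun i => lam i * (1 - (q i : ℝ))) (1 - t) :=
  stmt_14_general lam hpos hsum
end
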